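/- arXiv:2305.17340 — 9 statements merged into one kernel-verified Lean document; each statement's English description precedes it below -/
import Mathlib

section
/- For every k ∈ ℕ, every x ∈ X and every y ∈ Y: f(x̂_k, y) − f(x, ŷ_k) ≤ (1/(k+1)) ∑_{i=0}^{k} (1/(2σ_i))(‖y − y^i‖² − ‖y − y^{i+1}‖² − ‖y^i − y^{i+1}‖²) + (1/(k+1)) ∑_{i=0}^{k} (1/(2τ_i))(‖x − x^i‖² − ‖x − x^{i+1}‖² − ‖x^i − x^{i+1}‖²) + (1/(k+1)) ∑_{i=0}^{k} ( f(x^{i+1}, y) − f(x̄^i, y) + f(x̄^i, y^{i+1}) − f(x, y^{i+1}) − f(x^{i+1}, ȳ^{i+1}) + f(x, ȳ^{i+1}) ). -/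
open RealInnerProductSpace Finset

section Average

variable {𝕜 E β ι : Type*} [Field 𝕜] [LinearOrder 𝕜] [IsStrictOrderedRing 𝕜]
  [AddCommGroup E] [Module 𝕜 E] [AddCommGroup β] [PartialOrder β] [IsOrderedAddMonoid β]
  [Module 𝕜 β] [IsStrictOrderedModule 𝕜 β] {s : Set E} {g : E → β} {t : Finset ι} {v : ι → E}

theorem ConvexOn.map_finset_average_le (hg : ConvexOn 𝕜 s g) (ht : t.Nonempty)
    (hv : ∀ i ∈ t, v i ∈ s) :
    g ((#t : 𝕜)⁻¹ • ∑ i ∈ t, v i) ≤ (#t : 𝕜)⁻¹ • ∑ i ∈ t, g (v i) := by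
  rw [smul_sum, smul_sum]
  refine hg.map_sum_le (fun _ _ => by positivity) ?_ hv
  rw [sum_const, nsmul_eq_mul, mul_inv_cancel₀ (by exact_mod_cast ht.card_pos.ne')]

theorem ConcaveOn.le_map_finset_average (hg : ConcaveOn 𝕜 s g) (ht : t.Nonempty)
    (hv : ∀ i ∈ t, v i ∈ s) :
    (#t : 𝕜)⁻¹ • ∑ i ∈ t, g (v i) ≤ g ((#t : 𝕜)⁻¹ • ∑ i ∈ t, v i) :=
  ConvexOn.map_finset_average_le (β := βᵒᵈ) hg ht hv

end Average

theorem stmt_5_general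
    {H₁ : Type*} [NormedAddCommGroup H₁] [InnerProductSpace ℝ H₁]
    {H₂ : Type*} [NormedAddCommGroup H₂] [InnerProductSpace ℝ H₂]
    (X : Set H₁) (Y : Set H₂)
    (f : H₁ → H₂ → ℝ)
    (hfcvx : ∀ y ∈ Y, ConvexOn ℝ X (fun x => f x y))
    (hfccv : ∀ x ∈ X, ConcaveOn ℝ Y (fun y => f x y))
    (xs : ℕ → H₁) (ys : ℕ → H₂) (hxX : ∀ k, xs k ∈ X) (hyY : ∀ k, ys k ∈ Y)
    (xbs : ℕ → H₁) (ybs : ℕ → H₂)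
    (τs σs : ℕ → ℝ)
    (hA : ∀ k, ∀ y ∈ Y,
      (1/(2*σs k)) * (‖ys k - ys (k+1)‖^2 + ‖y - ys (k+1)‖^2 - ‖y - ys k‖^2)
        + f (xbs k) y - f (xbs k) (ys (k+1)) ≤ 0)
    (hB : ∀ k, ∀ x ∈ X,
      (1/(2*τs k)) * (‖xs k - xs (k+1)‖^2 + ‖x - xs (k+1)‖^2 - ‖x - xs k‖^2)
        + f (xs (k+1)) (ybs (k+1)) - f x (ybs (k+1)) ≤ 0)
    (k : ℕ) (x : H₁) (hx : x ∈ X) (y : H₂) (hy : y ∈ Y) :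
    f ((((k : ℝ)+1)⁻¹) • ∑ i ∈ Finset.range (k+1), xs (i+1)) y
      - f x ((((k : ℝ)+1)⁻¹) • ∑ i ∈ Finset.range (k+1), ys (i+1))
    ≤ (((k : ℝ)+1)⁻¹) * ∑ i ∈ Finset.range (k+1),
        (1/(2*σs i)) * (‖y - ys i‖^2 - ‖y - ys (i+1)‖^2 - ‖ys i - ys (i+1)‖^2)
      + (((k : ℝ)+1)⁻¹) * ∑ i ∈ Finset.range (k+1),
        (1/(2*τs i)) * (‖x - xs i‖^2 - ‖x - xs (i+1)‖^2 - ‖xs i - xs (i+1)‖^2)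
      + (((k : ℝ)+1)⁻¹) * ∑ i ∈ Finset.range (k+1),
        (f (xs (i+1)) y - f (xbs i) y + f (xbs i) (ys (i+1)) - f x (ys (i+1))
          - f (xs (i+1)) (ybs (i+1)) + f x (ybs (i+1))) := by
  have hconvex := (hfcvx y hy).map_finset_average_le (nonempty_range_add_one (n := k))
    (fun i _ => hxX (i + 1))
  have hconcave := (hfccv x hx).le_map_finset_average (nonempty_range_add_one (n := k))
    (fun i _ => hyY (i + 1))
  simp only [card_range, Nat.cast_succ, smul_eq_mul] at hconvex hconcave
  rw [← mul_add, ← mul_add, ← sum_add_distrib, ← sum_add_distrib]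
  calc _ ≤ ((k : ℝ) + 1)⁻¹ * ∑ i ∈ range (k + 1), f (xs (i + 1)) y
        - ((k : ℝ) + 1)⁻¹ * ∑ i ∈ range (k + 1), f x (ys (i + 1)) := sub_le_sub hconvex hconcave
    _ = ((k : ℝ) + 1)⁻¹ * ∑ i ∈ range (k + 1), (f (xs (i + 1)) y - f x (ys (i + 1))) := by
      rw [sum_sub_distrib, mul_sub]
    _ ≤ _ := by
      gcongr with i
      linarith [hA i y hy, hB i x hx]

/-- Lemma 3.6(iii): ergodic gap inequality for the alternating proximity mapping iterates. -/
theorem stmt_5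
    {H₁ : Type*} [NormedAddCommGroup H₁] [InnerProductSpace ℝ H₁] [CompleteSpace H₁]
    {H₂ : Type*} [NormedAddCommGroup H₂] [InnerProductSpace ℝ H₂] [CompleteSpace H₂]
    (X : Set H₁) (Y : Set H₂)
    (hXne : X.Nonempty) (hXcl : IsClosed X) (hXcv : Convex ℝ X)
    (hYne : Y.Nonempty) (hYcl : IsClosed Y) (hYcv : Convex ℝ Y)
    (f : H₁ → H₂ → ℝ)
    (hfcvx : ∀ y ∈ Y, ConvexOn ℝ X (fun x => f x y))
    (hfccv : ∀ x ∈ X, ConcaveOn ℝ Y (fun y => f x y))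
    (xs : ℕ → H₁) (ys : ℕ → H₂) (hxX : ∀ k, xs k ∈ X) (hyY : ∀ k, ys k ∈ Y)
    (xbs : ℕ → H₁) (ybs : ℕ → H₂)
    (τs σs : ℕ → ℝ) (hτ : ∀ k, 0 < τs k) (hσ : ∀ k, 0 < σs k)
    (hA : ∀ k, ∀ y ∈ Y,
      (1/(2*σs k)) * (‖ys k - ys (k+1)‖^2 + ‖y - ys (k+1)‖^2 - ‖y - ys k‖^2)
        + f (xbs k) y - f (xbs k) (ys (k+1)) ≤ 0)
    (hB : ∀ k, ∀ x ∈ X,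
      (1/(2*τs k)) * (‖xs k - xs (k+1)‖^2 + ‖x - xs (k+1)‖^2 - ‖x - xs k‖^2)
        + f (xs (k+1)) (ybs (k+1)) - f x (ybs (k+1)) ≤ 0)
    (k : ℕ) (x : H₁) (hx : x ∈ X) (y : H₂) (hy : y ∈ Y) :
    f ((((k : ℝ)+1)⁻¹) • ∑ i ∈ Finset.range (k+1), xs (i+1)) y
      - f x ((((k : ℝ)+1)⁻¹) • ∑ i ∈ Finset.range (k+1), ys (i+1))
    ≤ (((k : ℝ)+1)⁻¹) * ∑ i ∈ Finset.range (k+1),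
        (1/(2*σs i)) * (‖y - ys i‖^2 - ‖y - ys (i+1)‖^2 - ‖ys i - ys (i+1)‖^2)
      + (((k : ℝ)+1)⁻¹) * ∑ i ∈ Finset.range (k+1),
        (1/(2*τs i)) * (‖x - xs i‖^2 - ‖x - xs (i+1)‖^2 - ‖xs i - xs (i+1)‖^2)
      + (((k : ℝ)+1)⁻¹) * ∑ i ∈ Finset.range (k+1),
        (f (xs (i+1)) y - f (xbs i) y + f (xbs i) (ys (i+1)) - f x (ys (i+1))
          - f (xs (i+1)) (ybs (i+1)) + f x (ybs (i+1))) :=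
  stmt_5_general X Y f hfcvx hfccv xs ys hxX hyY xbs ybs τs σs hA hB k x hx y hy
end

section
/- Suppose (x*, y*) is a saddle-point of f. Then for every k ∈ ℕ: ∑_{i=0}^{k} ( f(x*, y^{i+1}) + f(x^{i+1}, ȳ^{i+1}) − f(x*, ȳ^{i+1}) − f(x^{i+1}, y*) + f(x̄^i, y*) − f(x̄^i, y^{i+1}) ) ≤ ∑_{i=0}^{k} (1/(2σ_i))(‖y* − y^i‖² − ‖y* − y^{i+1}‖² − ‖y^i − y^{i+1}‖²) + ∑_{i=0}^{k} (1/(2τ_i))(‖x* − x^i‖² − ‖x* − x^{i+1}‖² − ‖x^i − x^{i+1}‖²). -/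
/-!
The inequality holds summand by summand: add (A) at `y = y*` and (B) at `x = x*`; what remains
of the summand is `f(x*, y^{i+1}) - f(x^{i+1}, y*)`, which is nonpositive because
`f(x*, y^{i+1}) ≤ f(x*, y*) ≤ f(x^{i+1}, y*)` at a saddle point.
-/

theorem saddle_value_le_of_mem {α β : Type*} {X : Set α} {Y : Set β} {f : α → β → ℝ}
    {xstar : α} {ystar : β}
    (hsaddle : ∀ x ∈ X, ∀ y ∈ Y, f xstar y ≤ f xstar ystar ∧ f xstar ystar ≤ f x ystar)
    {x : α} {y : β} (hx : x ∈ X) (hy : y ∈ Y) :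
    f xstar y ≤ f x ystar :=
  (hsaddle x hx y hy).1.trans (hsaddle x hx y hy).2

theorem stmt_6_general
    {H₁ : Type*} [NormedAddCommGroup H₁]
    {H₂ : Type*} [NormedAddCommGroup H₂]
    (X : Set H₁) (Y : Set H₂)
    (f : H₁ → H₂ → ℝ)
    (xs : ℕ → H₁) (ys : ℕ → H₂) (hxX : ∀ k, xs k ∈ X) (hyY : ∀ k, ys k ∈ Y)
    (xbs : ℕ → H₁) (ybs : ℕ → H₂)
    (τs σs : ℕ → ℝ)
    (hA : ∀ k, ∀ y ∈ Y,
      (1/(2*σs k)) * (‖ys k - ys (k+1)‖^2 + ‖y - ys (k+1)‖^2 - ‖y - ys k‖^2)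
        + f (xbs k) y - f (xbs k) (ys (k+1)) ≤ 0)
    (hB : ∀ k, ∀ x ∈ X,
      (1/(2*τs k)) * (‖xs k - xs (k+1)‖^2 + ‖x - xs (k+1)‖^2 - ‖x - xs k‖^2)
        + f (xs (k+1)) (ybs (k+1)) - f x (ybs (k+1)) ≤ 0)
    (xstar : H₁) (ystar : H₂) (hxstar : xstar ∈ X) (hystar : ystar ∈ Y)
    (hsaddle : ∀ x ∈ X, ∀ y ∈ Y, f xstar y ≤ f xstar ystar ∧ f xstar ystar ≤ f x ystar)
    (k : ℕ) :
    ∑ i ∈ Finset.range (k+1),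
        (f xstar (ys (i+1)) + f (xs (i+1)) (ybs (i+1)) - f xstar (ybs (i+1))
          - f (xs (i+1)) ystar + f (xbs i) ystar - f (xbs i) (ys (i+1)))
    ≤ ∑ i ∈ Finset.range (k+1),
        (1/(2*σs i)) * (‖ystar - ys i‖^2 - ‖ystar - ys (i+1)‖^2 - ‖ys i - ys (i+1)‖^2)
      + ∑ i ∈ Finset.range (k+1),
        (1/(2*τs i)) * (‖xstar - xs i‖^2 - ‖xstar - xs (i+1)‖^2 - ‖xs i - xs (i+1)‖^2) := by
  rw [← Finset.sum_add_distrib]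
  refine Finset.sum_le_sum fun i _ => ?_
  have dual_step := hA i ystar hystar
  have primal_step := hB i xstar hxstar
  have gap := saddle_value_le_of_mem hsaddle (hxX (i+1)) (hyY (i+1))
  linarith

/-- Corollary 3.7(iii): summed inequality at a saddle-point. -/
theorem stmt_6
    {H₁ : Type*} [NormedAddCommGroup H₁] [InnerProductSpace ℝ H₁] [CompleteSpace H₁]
    {H₂ : Type*} [NormedAddCommGroup H₂] [InnerProductSpace ℝ H₂] [CompleteSpace H₂]
    (X : Set H₁) (Y : Set H₂)
    (hXne : X.Nonempty) (hXcl : IsClosed X) (hXcv : Convex ℝ X)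
    (hYne : Y.Nonempty) (hYcl : IsClosed Y) (hYcv : Convex ℝ Y)
    (f : H₁ → H₂ → ℝ)
    (hfcvx : ∀ y ∈ Y, ConvexOn ℝ X (fun x => f x y))
    (hfccv : ∀ x ∈ X, ConcaveOn ℝ Y (fun y => f x y))
    (xs : ℕ → H₁) (ys : ℕ → H₂) (hxX : ∀ k, xs k ∈ X) (hyY : ∀ k, ys k ∈ Y)
    (xbs : ℕ → H₁) (ybs : ℕ → H₂)
    (τs σs : ℕ → ℝ) (hτ : ∀ k, 0 < τs k) (hσ : ∀ k, 0 < σs k)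
    (hA : ∀ k, ∀ y ∈ Y,
      (1/(2*σs k)) * (‖ys k - ys (k+1)‖^2 + ‖y - ys (k+1)‖^2 - ‖y - ys k‖^2)
        + f (xbs k) y - f (xbs k) (ys (k+1)) ≤ 0)
    (hB : ∀ k, ∀ x ∈ X,
      (1/(2*τs k)) * (‖xs k - xs (k+1)‖^2 + ‖x - xs (k+1)‖^2 - ‖x - xs k‖^2)
        + f (xs (k+1)) (ybs (k+1)) - f x (ybs (k+1)) ≤ 0)
    (xstar : H₁) (ystar : H₂) (hxstar : xstar ∈ X) (hystar : ystar ∈ Y)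
    (hsaddle : ∀ x ∈ X, ∀ y ∈ Y, f xstar y ≤ f xstar ystar ∧ f xstar ystar ≤ f x ystar)
    (k : ℕ) :
    ∑ i ∈ Finset.range (k+1),
        (f xstar (ys (i+1)) + f (xs (i+1)) (ybs (i+1)) - f xstar (ybs (i+1))
          - f (xs (i+1)) ystar + f (xbs i) ystar - f (xbs i) (ys (i+1)))
    ≤ ∑ i ∈ Finset.range (k+1),
        (1/(2*σs i)) * (‖ystar - ys i‖^2 - ‖ystar - ys (i+1)‖^2 - ‖ys i - ys (i+1)‖^2)
      + ∑ i ∈ Finset.range (k+1),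
        (1/(2*τs i)) * (‖xstar - xs i‖^2 - ‖xstar - xs (i+1)‖^2 - ‖xs i - xs (i+1)‖^2) :=
  stmt_6_general X Y f xs ys hxX hyY xbs ybs τs σs hA hB xstar ystar hxstar hystar hsaddle k
end

section
/- Suppose (x*, y*) is a saddle-point of f. Then for every k ∈ ℕ: f(x̂_k, ŷ_k) − f(x*, y*) ≤ (1/(k+1)) ∑_{i=0}^{k} (1/(2τ_i))(‖x* − x^i‖² − ‖x* − x^{i+1}‖² − ‖x^i − x^{i+1}‖²) + (1/(k+1)) ∑_{i=0}^{k} (1/(2σ_i))(‖ŷ_k − y^i‖² − ‖ŷ_k − y^{i+1}‖² − ‖y^i − y^{i+1}‖²) + (1/(k+1)) ∑_{i=0}^{k} ( f(x^{i+1}, ŷ_k) − f(x̄^i, ŷ_k) + f(x̄^i, y^{i+1}) − f(x*, y^{i+1}) − f(x^{i+1}, ȳ^{i+1}) + f(x*, ȳ^{i+1}) ). -/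
/-!
Convexity of `f (·, ŷₖ)` and concavity of `f (x*, ·)` (Jensen) give
`f(x̂ₖ, ŷₖ) − f(x*, y*) ≤ f(x̂ₖ, ŷₖ) − f(x*, ŷₖ) ≤ (k+1)⁻¹ ∑ᵢ (f(xⁱ⁺¹, ŷₖ) − f(x*, yⁱ⁺¹))`,
the first step because `(x*, y*)` is a saddle point and `ŷₖ ∈ Y`. Each summand is then bounded
by adding (A) at `y = ŷₖ` and (B) at `x = x*`.
-/

open Finset

section UniformAverage

variable {ι E : Type*} [AddCommGroup E] [Module ℝ E] {s : Set E} {t : Finset ι} {p : ι → E}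

lemma Finset.sum_inv_card_eq_one (ht : t.Nonempty) : ∑ _i ∈ t, (#t : ℝ)⁻¹ = 1 := by
  rw [sum_const, nsmul_eq_mul, mul_inv_cancel₀ (by exact_mod_cast ht.card_ne_zero)]

lemma Convex.inv_card_smul_sum_mem (hs : Convex ℝ s) (ht : t.Nonempty)
    (hp : ∀ i ∈ t, p i ∈ s) : (#t : ℝ)⁻¹ • ∑ i ∈ t, p i ∈ s := by
  rw [smul_sum]
  exact hs.sum_mem (fun _ _ => by positivity) (sum_inv_card_eq_one ht) hp

lemma ConvexOn.map_inv_card_smul_sum_le {g : E → ℝ} (hg : ConvexOn ℝ s g) (ht : t.Nonempty)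
    (hp : ∀ i ∈ t, p i ∈ s) :
    g ((#t : ℝ)⁻¹ • ∑ i ∈ t, p i) ≤ (#t : ℝ)⁻¹ * ∑ i ∈ t, g (p i) := by
  rw [smul_sum, mul_sum]
  exact hg.map_sum_le (fun _ _ => by positivity) (sum_inv_card_eq_one ht) hp

lemma ConcaveOn.inv_card_mul_sum_le_map {g : E → ℝ} (hg : ConcaveOn ℝ s g) (ht : t.Nonempty)
    (hp : ∀ i ∈ t, p i ∈ s) :
    (#t : ℝ)⁻¹ * ∑ i ∈ t, g (p i) ≤ g ((#t : ℝ)⁻¹ • ∑ i ∈ t, p i) := by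
  rw [smul_sum, mul_sum]
  exact hg.le_map_sum (fun _ _ => by positivity) (sum_inv_card_eq_one ht) hp

end UniformAverage

theorem stmt_7_general
    {H₁ : Type*} [NormedAddCommGroup H₁] [InnerProductSpace ℝ H₁]
    {H₂ : Type*} [NormedAddCommGroup H₂] [InnerProductSpace ℝ H₂]
    (X : Set H₁) (Y : Set H₂)
    (hYcv : Convex ℝ Y)
    (f : H₁ → H₂ → ℝ)
    (hfcvx : ∀ y ∈ Y, ConvexOn ℝ X (fun x => f x y))
    (hfccv : ∀ x ∈ X, ConcaveOn ℝ Y (fun y => f x y))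
    (xs : ℕ → H₁) (ys : ℕ → H₂) (hxX : ∀ k, xs k ∈ X) (hyY : ∀ k, ys k ∈ Y)
    (xbs : ℕ → H₁) (ybs : ℕ → H₂)
    (τs σs : ℕ → ℝ)
    (hA : ∀ k, ∀ y ∈ Y,
      (1/(2*σs k)) * (‖ys k - ys (k+1)‖^2 + ‖y - ys (k+1)‖^2 - ‖y - ys k‖^2)
        + f (xbs k) y - f (xbs k) (ys (k+1)) ≤ 0)
    (hB : ∀ k, ∀ x ∈ X,
      (1/(2*τs k)) * (‖xs k - xs (k+1)‖^2 + ‖x - xs (k+1)‖^2 - ‖x - xs k‖^2)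
        + f (xs (k+1)) (ybs (k+1)) - f x (ybs (k+1)) ≤ 0)
    (xstar : H₁) (ystar : H₂) (hxstar : xstar ∈ X)
    (hsaddle : ∀ x ∈ X, ∀ y ∈ Y, f xstar y ≤ f xstar ystar ∧ f xstar ystar ≤ f x ystar)
    (k : ℕ)
    (xhat : H₁) (yhat : H₂)
    (hxhat : xhat = (((k : ℝ)+1)⁻¹) • ∑ i ∈ Finset.range (k+1), xs (i+1))
    (hyhat : yhat = (((k : ℝ)+1)⁻¹) • ∑ i ∈ Finset.range (k+1), ys (i+1)) :
    f xhat yhat - f xstar ystar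
    ≤ (((k : ℝ)+1)⁻¹) * ∑ i ∈ Finset.range (k+1),
        (1/(2*τs i)) * (‖xstar - xs i‖^2 - ‖xstar - xs (i+1)‖^2 - ‖xs i - xs (i+1)‖^2)
      + (((k : ℝ)+1)⁻¹) * ∑ i ∈ Finset.range (k+1),
        (1/(2*σs i)) * (‖yhat - ys i‖^2 - ‖yhat - ys (i+1)‖^2 - ‖ys i - ys (i+1)‖^2)
      + (((k : ℝ)+1)⁻¹) * ∑ i ∈ Finset.range (k+1),
        (f (xs (i+1)) yhat - f (xbs i) yhat + f (xbs i) (ys (i+1)) - f xstar (ys (i+1))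
          - f (xs (i+1)) (ybs (i+1)) + f xstar (ybs (i+1))) := by
  have hne : (range (k + 1)).Nonempty := nonempty_range_add_one
  have hcard : ((#(range (k + 1)) : ℕ) : ℝ)⁻¹ = ((k : ℝ) + 1)⁻¹ := by simp
  have hyhatY : yhat ∈ Y := by
    rw [hyhat, ← hcard]
    exact hYcv.inv_card_smul_sum_mem hne fun i _ => hyY (i + 1)
  have hx_jensen : f xhat yhat ≤ ((k : ℝ) + 1)⁻¹ * ∑ i ∈ range (k + 1), f (xs (i + 1)) yhat := by
    rw [hxhat, ← hcard]
    exact (hfcvx yhat hyhatY).map_inv_card_smul_sum_le hne fun i _ => hxX (i + 1)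
  have hy_jensen : ((k : ℝ) + 1)⁻¹ * ∑ i ∈ range (k + 1), f xstar (ys (i + 1)) ≤ f xstar yhat := by
    rw [hyhat, ← hcard]
    exact (hfccv xstar hxstar).inv_card_mul_sum_le_map hne fun i _ => hyY (i + 1)
  have hsaddle_yhat : f xstar yhat ≤ f xstar ystar := (hsaddle xstar hxstar yhat hyhatY).1
  have hstep := sum_le_sum fun i (_ : i ∈ range (k + 1)) =>
    show f (xs (i+1)) yhat - f xstar (ys (i+1)) ≤
      (1/(2*τs i)) * (‖xstar - xs i‖^2 - ‖xstar - xs (i+1)‖^2 - ‖xs i - xs (i+1)‖^2)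
      + (1/(2*σs i)) * (‖yhat - ys i‖^2 - ‖yhat - ys (i+1)‖^2 - ‖ys i - ys (i+1)‖^2)
      + (f (xs (i+1)) yhat - f (xbs i) yhat + f (xbs i) (ys (i+1)) - f xstar (ys (i+1))
          - f (xs (i+1)) (ybs (i+1)) + f xstar (ybs (i+1))) by
    linarith [hA i yhat hyhatY, hB i xstar hxstar]
  rw [sum_sub_distrib, sum_add_distrib, sum_add_distrib] at hstep
  have hw : (0 : ℝ) ≤ ((k : ℝ) + 1)⁻¹ := by positivity
  have havg := mul_le_mul_of_nonneg_left hstep hw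
  rw [mul_sub, mul_add, mul_add] at havg
  linarith

/-- Proposition 3.8(i): upper bound for `f(x̂ₖ, ŷₖ) − f(x*, y*)`. -/
theorem stmt_7
    {H₁ : Type*} [NormedAddCommGroup H₁] [InnerProductSpace ℝ H₁] [CompleteSpace H₁]
    {H₂ : Type*} [NormedAddCommGroup H₂] [InnerProductSpace ℝ H₂] [CompleteSpace H₂]
    (X : Set H₁) (Y : Set H₂)
    (hXne : X.Nonempty) (hXcl : IsClosed X) (hXcv : Convex ℝ X)
    (hYne : Y.Nonempty) (hYcl : IsClosed Y) (hYcv : Convex ℝ Y)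
    (f : H₁ → H₂ → ℝ)
    (hfcvx : ∀ y ∈ Y, ConvexOn ℝ X (fun x => f x y))
    (hfccv : ∀ x ∈ X, ConcaveOn ℝ Y (fun y => f x y))
    (xs : ℕ → H₁) (ys : ℕ → H₂) (hxX : ∀ k, xs k ∈ X) (hyY : ∀ k, ys k ∈ Y)
    (xbs : ℕ → H₁) (ybs : ℕ → H₂)
    (τs σs : ℕ → ℝ) (hτ : ∀ k, 0 < τs k) (hσ : ∀ k, 0 < σs k)
    (hA : ∀ k, ∀ y ∈ Y,
      (1/(2*σs k)) * (‖ys k - ys (k+1)‖^2 + ‖y - ys (k+1)‖^2 - ‖y - ys k‖^2)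
        + f (xbs k) y - f (xbs k) (ys (k+1)) ≤ 0)
    (hB : ∀ k, ∀ x ∈ X,
      (1/(2*τs k)) * (‖xs k - xs (k+1)‖^2 + ‖x - xs (k+1)‖^2 - ‖x - xs k‖^2)
        + f (xs (k+1)) (ybs (k+1)) - f x (ybs (k+1)) ≤ 0)
    (xstar : H₁) (ystar : H₂) (hxstar : xstar ∈ X) (hystar : ystar ∈ Y)
    (hsaddle : ∀ x ∈ X, ∀ y ∈ Y, f xstar y ≤ f xstar ystar ∧ f xstar ystar ≤ f x ystar)
    (k : ℕ)
    (xhat : H₁) (yhat : H₂)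
    (hxhat : xhat = (((k : ℝ)+1)⁻¹) • ∑ i ∈ Finset.range (k+1), xs (i+1))
    (hyhat : yhat = (((k : ℝ)+1)⁻¹) • ∑ i ∈ Finset.range (k+1), ys (i+1)) :
    f xhat yhat - f xstar ystar
    ≤ (((k : ℝ)+1)⁻¹) * ∑ i ∈ Finset.range (k+1),
        (1/(2*τs i)) * (‖xstar - xs i‖^2 - ‖xstar - xs (i+1)‖^2 - ‖xs i - xs (i+1)‖^2)
      + (((k : ℝ)+1)⁻¹) * ∑ i ∈ Finset.range (k+1),
        (1/(2*σs i)) * (‖yhat - ys i‖^2 - ‖yhat - ys (i+1)‖^2 - ‖ys i - ys (i+1)‖^2)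
      + (((k : ℝ)+1)⁻¹) * ∑ i ∈ Finset.range (k+1),
        (f (xs (i+1)) yhat - f (xbs i) yhat + f (xbs i) (ys (i+1)) - f xstar (ys (i+1))
          - f (xs (i+1)) (ybs (i+1)) + f xstar (ybs (i+1))) :=
  stmt_7_general X Y hYcv f hfcvx hfccv xs ys hxX hyY xbs ybs τs σs hA hB xstar ystar hxstar hsaddle
    k xhat yhat hxhat hyhat
end

section
/- Suppose sup_{k∈ℕ} α_k < ∞, sup_{k∈ℕ} β_k < ∞, inf_{k∈ℕ} σ_k > 0 and inf_{k∈ℕ} τ_k > 0, and suppose ‖x^k − x^{k+1}‖ → 0 and ‖y^k − y^{k+1}‖ → 0 as k → ∞. Then every cluster point (x*, y*) of the sequence ((x^k, y^k))_{k∈ℕ} in the norm topology of H₁ × H₂ is a saddle-point of f. -/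
open RealInnerProductSpace Filter

lemma aux_smul_zero {E : Type*} [NormedAddCommGroup E] [NormedSpace ℝ E]
    (c : ℕ → ℝ) (v : ℕ → E) (B : ℝ) (hc0 : ∀ k, 0 ≤ c k) (hcB : ∀ k, c k ≤ B)
    (hv : Tendsto (fun k => ‖v k‖) atTop (nhds 0)) :
    Tendsto (fun k => c k • v k) atTop (nhds (0 : E)) := by
  rw [tendsto_zero_iff_norm_tendsto_zero]
  refine squeeze_zero (fun k => norm_nonneg _) (fun k => ?_) (by simpa using hv.const_mul B)
  rw [norm_smul, Real.norm_of_nonneg (hc0 k)]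
  exact mul_le_mul_of_nonneg_right (hcB k) (norm_nonneg _)

lemma aux_lsc_lim {E : Type*} [TopologicalSpace E] (g : E → ℝ) (hg : LowerSemicontinuous g)
    (a : ℕ → ℝ) (z : ℕ → E) (A C : ℝ) (z0 : E)
    (ha : Tendsto a atTop (nhds A)) (hz : Tendsto z atTop (nhds z0))
    (hle : ∀ i, a i + g (z i) ≤ C) : A + g z0 ≤ C := by
  by_contra hlt
  push_neg at hlt
  set ε := (A + g z0 - C) / 2 with hε
  have hεpos : 0 < ε := by simp [hε]; linarith
  have h1 : ∀ᶠ i in atTop, A - ε < a i :=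
    ha.eventually (eventually_gt_nhds (by linarith))
  have h2 : ∀ᶠ i in atTop, g z0 - ε < g (z i) :=
    hz.eventually (hg z0 (g z0 - ε) (by linarith))
  obtain ⟨i, hi1, hi2⟩ := (h1.and h2).exists
  have := hle i
  linarith

/-- Lemma 4.3: under vanishing successive differences, every (strong) cluster point of the
iterate sequence is a saddle-point of `f`.  Here `αs i` models the shifted family
`α_{i-1}`, so the extrapolation update for `x̄^{k+1}` uses `αs (k+1) = α_k`. -/
theorem stmt_11
    {H₁ : Type*} [NormedAddCommGroup H₁] [InnerProductSpace ℝ H₁] [CompleteSpace H₁]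
    {H₂ : Type*} [NormedAddCommGroup H₂] [InnerProductSpace ℝ H₂] [CompleteSpace H₂]
    (X : Set H₁) (Y : Set H₂)
    (hXne : X.Nonempty) (hXcl : IsClosed X) (hXcv : Convex ℝ X)
    (hYne : Y.Nonempty) (hYcl : IsClosed Y) (hYcv : Convex ℝ Y)
    (K : H₁ →L[ℝ] H₂) (g : H₁ → ℝ) (h : H₂ → ℝ)
    (hg : ConvexOn ℝ Set.univ g) (hglsc : LowerSemicontinuous g)
    (hh : ConvexOn ℝ Set.univ h) (hhlsc : LowerSemicontinuous h)
    (f : H₁ → H₂ → ℝ)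
    (hf : ∀ x y, f x y = ⟪K x, y⟫ + g x - h y)
    (xs : ℕ → H₁) (ys : ℕ → H₂) (hxX : ∀ k, xs k ∈ X) (hyY : ∀ k, ys k ∈ Y)
    (τs σs : ℕ → ℝ) (hτ : ∀ k, 0 < τs k) (hσ : ∀ k, 0 < σs k)
    (αs βs : ℕ → ℝ) (hα : ∀ k, 0 ≤ αs k) (hβ : ∀ k, 0 ≤ βs k)
    (xbs : ℕ → H₁) (ybs : ℕ → H₂)
    (hxb0 : xbs 0 = xs 0)
    (hxbS : ∀ k, xbs (k+1) = xs (k+1) + αs (k+1) • (xs (k+1) - xs k))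
    (hyb0 : ybs 0 = ys 0)
    (hybS : ∀ k, ybs (k+1) = ys (k+1) + βs k • (ys (k+1) - ys k))
    (hiterx : ∀ k, ∀ x ∈ X,
      ⟪(τs k)⁻¹ • (xs k - xs (k+1)) - (ContinuousLinearMap.adjoint K) (ybs (k+1)),
        x - xs (k+1)⟫ + g (xs (k+1)) ≤ g x)
    (hitery : ∀ k, ∀ y ∈ Y,
      ⟪(σs k)⁻¹ • (ys k - ys (k+1)) + K (xbs k), y - ys (k+1)⟫ + h (ys (k+1)) ≤ h y)
    (hαbdd : BddAbove (Set.range αs)) (hβbdd : BddAbove (Set.range βs))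
    (hσinf : 0 < ⨅ k, σs k) (hτinf : 0 < ⨅ k, τs k)
    (hxdiff : Filter.Tendsto (fun k => ‖xs k - xs (k+1)‖) Filter.atTop (nhds 0))
    (hydiff : Filter.Tendsto (fun k => ‖ys k - ys (k+1)‖) Filter.atTop (nhds 0)) :
    ∀ (xstar : H₁) (ystar : H₂),
      (∃ φ : ℕ → ℕ, StrictMono φ ∧
        Filter.Tendsto (fun i => (xs (φ i), ys (φ i))) Filter.atTop (nhds (xstar, ystar))) →
      xstar ∈ X ∧ ystar ∈ Y ∧
        ∀ x ∈ X, ∀ y ∈ Y, f xstar y ≤ f xstar ystar ∧ f xstar ystar ≤ f x ystar := by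
  rintro xstar ystar ⟨φ, hφ, hlim⟩
  have hφt : Tendsto φ atTop atTop := hφ.tendsto_atTop
  -- component limits
  have hx0 : Tendsto (fun i => xs (φ i)) atTop (nhds xstar) := by
    have := (continuous_fst.tendsto (xstar, ystar)).comp hlim
    simpa [Function.comp_def] using this
  have hy0 : Tendsto (fun i => ys (φ i)) atTop (nhds ystar) := by
    have := (continuous_snd.tendsto (xstar, ystar)).comp hlim
    simpa [Function.comp_def] using this
  have hdx : Tendsto (fun k => xs k - xs (k+1)) atTop (nhds 0) :=
    tendsto_zero_iff_norm_tendsto_zero.mpr hxdiff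
  have hdy : Tendsto (fun k => ys k - ys (k+1)) atTop (nhds 0) :=
    tendsto_zero_iff_norm_tendsto_zero.mpr hydiff
  have hx1 : Tendsto (fun i => xs (φ i + 1)) atTop (nhds xstar) := by
    have := hx0.sub (hdx.comp hφt)
    simpa using this
  have hy1 : Tendsto (fun i => ys (φ i + 1)) atTop (nhds ystar) := by
    have := hy0.sub (hdy.comp hφt)
    simpa using this
  obtain ⟨A, hA⟩ := hαbdd
  obtain ⟨B, hB⟩ := hβbdd
  have hAk : ∀ k, αs k ≤ A := fun k => hA ⟨k, rfl⟩
  have hBk : ∀ k, βs k ≤ B := fun k => hB ⟨k, rfl⟩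
  -- ybs (k+1) → ystar along subsequence
  have hybsmul : Tendsto (fun k => βs k • (ys (k+1) - ys k)) atTop (nhds (0 : H₂)) := by
    refine aux_smul_zero _ _ B hβ hBk ?_
    simpa [norm_sub_rev] using hydiff
  have hyb : Tendsto (fun i => ybs (φ i + 1)) atTop (nhds ystar) := by
    have := hy1.add (hybsmul.comp hφt)
    simp only [add_zero] at this
    refine this.congr (fun i => ?_)
    rw [hybS]
    rfl
  -- xbs k - xs k → 0
  have hebx : Tendsto (fun k => xbs k - xs k) atTop (nhds (0 : H₁)) := by
    rw [← tendsto_add_atTop_iff_nat 1]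
    have : Tendsto (fun k => αs (k+1) • (xs (k+1) - xs k)) atTop (nhds (0 : H₁)) := by
      refine aux_smul_zero _ _ A (fun k => hα _) (fun k => hAk _) ?_
      simpa [norm_sub_rev] using hxdiff
    refine this.congr (fun k => ?_)
    rw [hxbS]
    abel
  have hxb : Tendsto (fun i => xbs (φ i)) atTop (nhds xstar) := by
    have := hx0.add (hebx.comp hφt)
    simp only [add_zero] at this
    refine this.congr (fun i => ?_)
    simp
  -- step-size terms vanish
  have hτbb : BddBelow (Set.range τs) := ⟨0, by rintro _ ⟨k, rfl⟩; exact (hτ k).le⟩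
  have hσbb : BddBelow (Set.range σs) := ⟨0, by rintro _ ⟨k, rfl⟩; exact (hσ k).le⟩
  have hτterm : Tendsto (fun k => (τs k)⁻¹ • (xs k - xs (k+1))) atTop (nhds (0 : H₁)) := by
    refine aux_smul_zero _ _ (⨅ k, τs k)⁻¹ (fun k => (inv_nonneg).mpr (hτ k).le)
      (fun k => inv_anti₀ hτinf (ciInf_le hτbb k)) hxdiff
  have hσterm : Tendsto (fun k => (σs k)⁻¹ • (ys k - ys (k+1))) atTop (nhds (0 : H₂)) := by
    refine aux_smul_zero _ _ (⨅ k, σs k)⁻¹ (fun k => (inv_nonneg).mpr (hσ k).le)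
      (fun k => inv_anti₀ hσinf (ciInf_le hσbb k)) hydiff
  -- memberships
  have hxmem : xstar ∈ X :=
    hXcl.mem_of_tendsto hx0 (Filter.Eventually.of_forall fun i => hxX _)
  have hymem : ystar ∈ Y :=
    hYcl.mem_of_tendsto hy0 (Filter.Eventually.of_forall fun i => hyY _)
  refine ⟨hxmem, hymem, fun x hx y hy => ?_⟩
  -- x-side limit inequality
  have hu : Tendsto
      (fun i => (τs (φ i))⁻¹ • (xs (φ i) - xs (φ i + 1))
        - (ContinuousLinearMap.adjoint K) (ybs (φ i + 1))) atTop
      (nhds (-((ContinuousLinearMap.adjoint K) ystar))) := by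
    have := (hτterm.comp hφt).sub
      (((ContinuousLinearMap.adjoint K).continuous.tendsto ystar).comp hyb)
    simpa using this
  have hvx : Tendsto (fun i => x - xs (φ i + 1)) atTop (nhds (x - xstar)) :=
    tendsto_const_nhds.sub hx1
  have hIx : (⟪-((ContinuousLinearMap.adjoint K) ystar), x - xstar⟫) + g xstar ≤ g x :=
    aux_lsc_lim g hglsc _ _ _ _ _ (hu.inner hvx) hx1 (fun i => hiterx (φ i) x hx)
  -- y-side limit inequality
  have hw : Tendsto
      (fun i => (σs (φ i))⁻¹ • (ys (φ i) - ys (φ i + 1)) + K (xbs (φ i))) atTop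
      (nhds (K xstar)) := by
    have := (hσterm.comp hφt).add ((K.continuous.tendsto xstar).comp hxb)
    simpa using this
  have hvy : Tendsto (fun i => y - ys (φ i + 1)) atTop (nhds (y - ystar)) :=
    tendsto_const_nhds.sub hy1
  have hIy : (⟪K xstar, y - ystar⟫) + h ystar ≤ h y :=
    aux_lsc_lim h hhlsc _ _ _ _ _ (hw.inner hvy) hy1 (fun i => hitery (φ i) y hy)
  -- unfold inner products
  have heqx : (⟪-((ContinuousLinearMap.adjoint K) ystar), x - xstar⟫)
      = -(⟪K x, ystar⟫) + ⟪K xstar, ystar⟫ := by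
    rw [inner_neg_left, ContinuousLinearMap.adjoint_inner_left, map_sub, inner_sub_right]
    rw [real_inner_comm ystar (K x), real_inner_comm ystar (K xstar)]
    ring
  rw [heqx] at hIx
  have heqy : (⟪K xstar, y - ystar⟫) = ⟪K xstar, y⟫ - ⟪K xstar, ystar⟫ :=
    inner_sub_right _ _ _
  rw [heqy] at hIy
  constructor
  · rw [hf, hf]; linarith
  · rw [hf, hf]; linarith
end

section
/- For all natural numbers p, k with 1 ≤ p ≤ k, and all x ∈ X, y ∈ Y: ∑_{i=p}^{k} ( f(x^{i+1}, y) − f(x̄^i, y) + f(x̄^i, y^{i+1}) − f(x, y^{i+1}) − f(x^{i+1}, ȳ^{i+1}) + f(x, ȳ^{i+1}) ) ≤ (1/(2τ_k))‖x^{k+1} − x^k‖² + (‖K‖²·τ_k/2)‖y^{k+1} − y‖² + ‖K‖ ∑_{i=p}^{k} ‖x^i − x^{i−1}‖² + ‖K‖ ∑_{i=p}^{k} ‖y^i − y^{i+1}‖² + (‖K‖/2) ∑_{i=p}^{k} (1 − α_{i−1})²·‖y^{i+1} − y‖² + (‖K‖/2) ∑_{i=p}^{k} β_i²·‖x^{i+1}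 − x‖² + |⟪K(x^p − x^{p−1}), y^p − y⟫|. -/
open RealInnerProductSpace

private lemma tele_sum {F : ℕ → ℝ} {p k : ℕ} (h : p ≤ k) :
    ∑ i ∈ Finset.Icc p k, (F i - F (i+1)) = F p - F (k+1) := by
  induction k, h using Nat.le_induction with
  | base => simp
  | succ n hn ih =>
    rw [Finset.sum_Icc_succ_top (by omega), ih]; ring

set_option maxHeartbeats 1000000 in
/-- Lemma 4.7(iii): summed inequality from `p` to `k`.  Here `αs i` models the shifted
family `α_{i-1}`, so the extrapolation update for `x̄^{k+1}` uses `αs (k+1) = α_k`. -/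
theorem stmt_13
    {H₁ : Type*} [NormedAddCommGroup H₁] [InnerProductSpace ℝ H₁] [CompleteSpace H₁]
    {H₂ : Type*} [NormedAddCommGroup H₂] [InnerProductSpace ℝ H₂] [CompleteSpace H₂]
    (X : Set H₁) (Y : Set H₂)
    (hXne : X.Nonempty) (hXcl : IsClosed X) (hXcv : Convex ℝ X)
    (hYne : Y.Nonempty) (hYcl : IsClosed Y) (hYcv : Convex ℝ Y)
    (K : H₁ →L[ℝ] H₂) (g : H₁ → ℝ) (h : H₂ → ℝ)
    (f : H₁ → H₂ → ℝ)
    (hf : ∀ x y, f x y = ⟪K x, y⟫ + g x - h y)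
    (xs : ℕ → H₁) (ys : ℕ → H₂) (hxX : ∀ k, xs k ∈ X) (hyY : ∀ k, ys k ∈ Y)
    (τs : ℕ → ℝ) (hτ : ∀ k, 0 < τs k)
    (αs βs : ℕ → ℝ) (hα : ∀ k, 0 ≤ αs k) (hβ : ∀ k, 0 ≤ βs k)
    (xbs : ℕ → H₁) (ybs : ℕ → H₂)
    (hxb0 : xbs 0 = xs 0)
    (hxbS : ∀ k, xbs (k+1) = xs (k+1) + αs (k+1) • (xs (k+1) - xs k))
    (hyb0 : ybs 0 = ys 0)
    (hybS : ∀ k, ybs (k+1) = ys (k+1) + βs k • (ys (k+1) - ys k))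
    (p k : ℕ) (hp : 1 ≤ p) (hpk : p ≤ k)
    (x : H₁) (hx : x ∈ X) (y : H₂) (hy : y ∈ Y) :
    ∑ i ∈ Finset.Icc p k,
        (f (xs (i+1)) y - f (xbs i) y + f (xbs i) (ys (i+1)) - f x (ys (i+1))
          - f (xs (i+1)) (ybs (i+1)) + f x (ybs (i+1)))
    ≤ (1/(2*τs k)) * ‖xs (k+1) - xs k‖^2
      + (‖K‖^2 * τs k / 2) * ‖ys (k+1) - y‖^2
      + ‖K‖ * ∑ i ∈ Finset.Icc p k, ‖xs i - xs (i-1)‖^2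
      + ‖K‖ * ∑ i ∈ Finset.Icc p k, ‖ys i - ys (i+1)‖^2
      + (‖K‖/2) * ∑ i ∈ Finset.Icc p k, (1 - αs i)^2 * ‖ys (i+1) - y‖^2
      + (‖K‖/2) * ∑ i ∈ Finset.Icc p k, (βs i)^2 * ‖xs (i+1) - x‖^2
      + |⟪K (xs p - xs (p-1)), ys p - y⟫| := by
  -- basic bound on the bilinear form
  have hKb : ∀ (u : H₁) (v : H₂), |⟪K u, v⟫| ≤ ‖K‖ * ‖u‖ * ‖v‖ := by
    intro u v
    calc |⟪K u, v⟫| ≤ ‖K u‖ * ‖v‖ := abs_real_inner_le_norm _ _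
      _ ≤ ‖K‖ * ‖u‖ * ‖v‖ :=
        mul_le_mul_of_nonneg_right (K.le_opNorm u) (norm_nonneg v)
  have hKnn : (0:ℝ) ≤ ‖K‖ := norm_nonneg _
  set F : ℕ → ℝ := fun i => ⟪K (xs i - xs (i-1)), ys i - y⟫ with hF
  set R : ℕ → ℝ := fun i =>
      ⟪K (xs i - xs (i-1)), ys (i+1) - ys i⟫
      - (1 - αs i) * ⟪K (xs i - xs (i-1)), ys (i+1) - y⟫
      - βs i * ⟪K (xs (i+1) - x), ys (i+1) - ys i⟫ with hR
  -- per-index identity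
  have key : ∀ i ∈ Finset.Icc p k,
      (f (xs (i+1)) y - f (xbs i) y + f (xbs i) (ys (i+1)) - f x (ys (i+1))
        - f (xs (i+1)) (ybs (i+1)) + f x (ybs (i+1)))
      = (F i - F (i+1)) + R i := by
    intro i hi
    have hi1 : 1 ≤ i := hp.trans (Finset.mem_Icc.mp hi).1
    obtain ⟨j, rfl⟩ : ∃ j, i = j + 1 := ⟨i - 1, by omega⟩
    simp only [hf, hF, hR, hxbS j, hybS (j+1), Nat.add_sub_cancel]
    generalize xs j = a
    generalize xs (j+1) = b
    generalize xs (j+1+1) = c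
    generalize ys (j+1) = u
    generalize ys (j+1+1) = v
    simp only [map_add, map_sub, map_smul, inner_add_left, inner_sub_left,
      inner_add_right, inner_sub_right, real_inner_smul_left, real_inner_smul_right]
    ring
  rw [Finset.sum_congr rfl key, Finset.sum_add_distrib, tele_sum hpk]
  -- bound the telescoped part
  have hτk := hτ k
  have htele : F p - F (k+1)
      ≤ |⟪K (xs p - xs (p-1)), ys p - y⟫|
        + ((1/(2*τs k)) * ‖xs (k+1) - xs k‖^2 + (‖K‖^2 * τs k / 2) * ‖ys (k+1) - y‖^2) := by
    have h1 : F p ≤ |⟪K (xs p - xs (p-1)), ys p - y⟫| := le_abs_self _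
    have h2 : -F (k+1)
        ≤ (1/(2*τs k)) * ‖xs (k+1) - xs k‖^2 + (‖K‖^2 * τs k / 2) * ‖ys (k+1) - y‖^2 := by
      have hb : -F (k+1) ≤ ‖K‖ * ‖xs (k+1) - xs k‖ * ‖ys (k+1) - y‖ := by
        have := hKb (xs (k+1) - xs k) (ys (k+1) - y)
        have : -⟪K (xs (k+1) - xs k), ys (k+1) - y⟫ ≤ ‖K‖ * ‖xs (k+1) - xs k‖ * ‖ys (k+1) - y‖ :=
          (neg_le_abs _).trans (by simpa [abs_neg] using this)
        simpa [hF, Nat.add_sub_cancel] using this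
      refine hb.trans ?_
      set a := ‖xs (k+1) - xs k‖
      set b := ‖ys (k+1) - y‖
      have h2τ : (0:ℝ) < 2 * τs k := by linarith
      have hdiv : ‖K‖ * a * b ≤ (a^2 + ‖K‖^2 * (τs k)^2 * b^2) / (2 * τs k) := by
        rw [le_div_iff₀ h2τ]
        nlinarith [sq_nonneg (a - ‖K‖ * τs k * b)]
      refine hdiv.trans (le_of_eq ?_)
      field_simp
    linarith
  -- bound the remainder sum
  have hRbd : ∀ i ∈ Finset.Icc p k,
      R i ≤ ‖K‖ * ‖xs i - xs (i-1)‖^2 + ‖K‖ * ‖ys i - ys (i+1)‖^2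
        + (‖K‖/2) * ((1 - αs i)^2 * ‖ys (i+1) - y‖^2)
        + (‖K‖/2) * ((βs i)^2 * ‖xs (i+1) - x‖^2) := by
    intro i hi
    have hβi := hβ i
    have h1 := hKb (xs i - xs (i-1)) (ys (i+1) - ys i)
    have h2 := hKb (xs i - xs (i-1)) (ys (i+1) - y)
    have h3 := hKb (xs (i+1) - x) (ys (i+1) - ys i)
    have hw : ‖ys i - ys (i+1)‖ = ‖ys (i+1) - ys i‖ := norm_sub_rev _ _
    set d := ‖xs i - xs (i-1)‖
    set w := ‖ys (i+1) - ys i‖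
    set e := ‖ys (i+1) - y‖
    set z := ‖xs (i+1) - x‖
    have hd : (0:ℝ) ≤ d := norm_nonneg _
    have hwn : (0:ℝ) ≤ w := norm_nonneg _
    have he : (0:ℝ) ≤ e := norm_nonneg _
    have hz : (0:ℝ) ≤ z := norm_nonneg _
    rw [hR, hw]
    have habs1 : ⟪K (xs i - xs (i-1)), ys (i+1) - ys i⟫ ≤ ‖K‖ * d * w :=
      (le_abs_self _).trans h1
    have habs2 : -(1 - αs i) * ⟪K (xs i - xs (i-1)), ys (i+1) - y⟫
        ≤ |1 - αs i| * (‖K‖ * d * e) := by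
      calc -(1 - αs i) * ⟪K (xs i - xs (i-1)), ys (i+1) - y⟫
          ≤ |(-(1 - αs i)) * ⟪K (xs i - xs (i-1)), ys (i+1) - y⟫| := le_abs_self _
        _ = |1 - αs i| * |⟪K (xs i - xs (i-1)), ys (i+1) - y⟫| := by
            rw [abs_mul, abs_neg]
        _ ≤ |1 - αs i| * (‖K‖ * d * e) :=
            mul_le_mul_of_nonneg_left h2 (abs_nonneg _)
    have habs3 : -βs i * ⟪K (xs (i+1) - x), ys (i+1) - ys i⟫
        ≤ βs i * (‖K‖ * z * w) := by
      calc -βs i * ⟪K (xs (i+1) - x), ys (i+1) - ys i⟫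
          ≤ |(-βs i) * ⟪K (xs (i+1) - x), ys (i+1) - ys i⟫| := le_abs_self _
        _ = βs i * |⟪K (xs (i+1) - x), ys (i+1) - ys i⟫| := by
            rw [abs_mul, abs_neg, abs_of_nonneg hβi]
        _ ≤ βs i * (‖K‖ * z * w) := mul_le_mul_of_nonneg_left h3 hβi
    have hsq1 : ‖K‖ * d * w ≤ (‖K‖/2) * (d^2 + w^2) := by nlinarith [sq_nonneg (d - w)]
    have hsq2 : |1 - αs i| * (‖K‖ * d * e) ≤ (‖K‖/2) * (d^2 + (1 - αs i)^2 * e^2) := by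
      rw [← sq_abs (1 - αs i)]
      nlinarith [mul_nonneg hKnn (sq_nonneg (d - |1 - αs i| * e))]
    have hsq3 : βs i * (‖K‖ * z * w) ≤ (‖K‖/2) * ((βs i)^2 * z^2 + w^2) := by
      nlinarith [sq_nonneg (βs i * z - w), mul_nonneg hKnn (sq_nonneg (βs i * z - w))]
    nlinarith [habs1, habs2, habs3, hsq1, hsq2, hsq3]
  have hRsum : ∑ i ∈ Finset.Icc p k, R i
      ≤ ‖K‖ * ∑ i ∈ Finset.Icc p k, ‖xs i - xs (i-1)‖^2
        + ‖K‖ * ∑ i ∈ Finset.Icc p k, ‖ys i - ys (i+1)‖^2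
        + (‖K‖/2) * ∑ i ∈ Finset.Icc p k, (1 - αs i)^2 * ‖ys (i+1) - y‖^2
        + (‖K‖/2) * ∑ i ∈ Finset.Icc p k, (βs i)^2 * ‖xs (i+1) - x‖^2 := by
    calc ∑ i ∈ Finset.Icc p k, R i
        ≤ ∑ i ∈ Finset.Icc p k,
            (‖K‖ * ‖xs i - xs (i-1)‖^2 + ‖K‖ * ‖ys i - ys (i+1)‖^2
              + (‖K‖/2) * ((1 - αs i)^2 * ‖ys (i+1) - y‖^2)
              + (‖K‖/2) * ((βs i)^2 * ‖xs (i+1) - x‖^2)) := Finset.sum_le_sum hRbd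
      _ = _ := by
          simp only [Finset.sum_add_distrib, Finset.mul_sum]
  linarith [htele, hRsum]
end

section
/- Assume the parameter conditions (PC). Then for all natural numbers p, k with 1 ≤ p ≤ k, and all x ∈ X, y ∈ Y: (1/(2τ_p))‖x − x^p‖² + (1/(2σ_p))‖y − y^p‖² ≥ ∑_{i=p}^{k} ( f(x^{i+1}, y) − f(x, y^{i+1}) ) + (1/(2τ_{k+1}))‖x − x^{k+1}‖² + (1/(2σ_{k+1}) − ‖K‖²·τ_k/2)‖y − y^{k+1}‖² − ∑_{i=p}^{k−1} (‖K‖ − 1/(2τ_i))‖x^i − x^{i+1}‖² − ∑_{i=p}^{k} (‖K‖ − 1/(2σ_i))‖y^i − y^{i+1}‖² − ‖K‖·‖x^{p−1} − x^p‖² − |⟪K(x^p − x^{p−1}), y^p − y⟫|. -/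
/-!
Tested against a point `(x, y)`, one step of the primal-dual iteration combines the two proximal
inequalities (via the three-point identity) with Young's inequality on the coupling terms. Under
(PC) the extrapolation errors are absorbed exactly by the change of step sizes, so the energy
`Vᵢ = ‖x - xⁱ‖²/(2τᵢ) + ‖y - yⁱ‖²/(2σᵢ) - ⟪K(xⁱ - xⁱ⁻¹), y - yⁱ⟫ + ‖K‖‖xⁱ⁻¹ - xⁱ‖²`
drops at each step by at least the gap plus the increment terms. Summing from `p` to `k`
telescopes; `V_{k+1}` is bounded below by one more Young inequality with weight `τₖ`, and `V_p`
above by the absolute value of its cross term.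
-/

open RealInnerProductSpace Finset

lemma sum_Icc_add_le_of_forall_add_le {a c : ℕ → ℝ} {p k : ℕ} (hpk : p ≤ k)
    (h : ∀ i ∈ Icc p k, a i + c (i + 1) ≤ c i) : ∑ i ∈ Icc p k, a i + c (k + 1) ≤ c p := by
  induction k, hpk using Nat.le_induction with
  | base => simpa using h p (by simp)
  | succ k hpk ih =>
    rw [sum_Icc_succ_top (by omega)]
    have hlast := h (k + 1) (mem_Icc.2 ⟨by omega, le_rfl⟩)
    have hprev := ih fun i hi => h i (Icc_subset_Icc_right k.le_succ hi)
    linarith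

section Estimates

variable {E F : Type*} [NormedAddCommGroup E] [InnerProductSpace ℝ E]
  [NormedAddCommGroup F] [InnerProductSpace ℝ F]

lemma real_inner_apply_le_opNorm_mul_mul (K : E →L[ℝ] F) (u : E) (v : F) :
    ⟪K u, v⟫ ≤ ‖K‖ * ‖u‖ * ‖v‖ :=
  (real_inner_le_norm _ _).trans (mul_le_mul_of_nonneg_right (K.le_opNorm u) (norm_nonneg v))

lemma real_inner_apply_le_opNorm_mul_add_sq (K : E →L[ℝ] F) (u : E) (v : F) :
    ⟪K u, v⟫ ≤ ‖K‖ * (‖u‖ ^ 2 + ‖v‖ ^ 2) / 2 := by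
  have hamgm := two_mul_le_add_sq ‖u‖ ‖v‖
  calc ⟪K u, v⟫ ≤ ‖K‖ * (‖u‖ * ‖v‖) := by
        simpa only [mul_assoc] using real_inner_apply_le_opNorm_mul_mul K u v
    _ ≤ ‖K‖ * ((‖u‖ ^ 2 + ‖v‖ ^ 2) / 2) := by gcongr; linarith
    _ = ‖K‖ * (‖u‖ ^ 2 + ‖v‖ ^ 2) / 2 := by ring

lemma real_inner_apply_le_div_add_opNorm_sq_mul (K : E →L[ℝ] F) (u : E) (v : F) {t : ℝ}
    (ht : 0 < t) : ⟪K u, v⟫ ≤ ‖u‖ ^ 2 / (2 * t) + ‖K‖ ^ 2 * t * ‖v‖ ^ 2 / 2 := by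
  have hsq : 0 ≤ (‖u‖ - t * ‖K‖ * ‖v‖) ^ 2 / (2 * t) := by positivity
  have hexp : (‖u‖ - t * ‖K‖ * ‖v‖) ^ 2 / (2 * t)
      = ‖u‖ ^ 2 / (2 * t) + ‖K‖ ^ 2 * t * ‖v‖ ^ 2 / 2 - ‖K‖ * ‖u‖ * ‖v‖ := by
    field_simp
    ring
  linarith [real_inner_apply_le_opNorm_mul_mul K u v]

/-- Three-point identity: `2⟪u - u', z - u'⟫ = ‖z - u'‖² + ‖u - u'‖² - ‖z - u‖²`. -/
lemma le_add_inner_of_prox_ineq {φ : E → ℝ} {τ : ℝ} {u u' w z : E}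
    (hz : ⟪τ⁻¹ • (u - u') - w, z - u'⟫ + φ u' ≤ φ z) :
    φ u' + 1 / (2 * τ) * (‖z - u'‖ ^ 2 + ‖u - u'‖ ^ 2 - ‖z - u‖ ^ 2) ≤ φ z + ⟪w, z - u'⟫ := by
  have hthree : ‖z - u‖ ^ 2 = ‖z - u'‖ ^ 2 - 2 * ⟪u - u', z - u'⟫ + ‖u - u'‖ ^ 2 := by
    rw [real_inner_comm, ← norm_sub_sq_real, sub_sub_sub_cancel_right]
  rw [inner_sub_left, real_inner_smul_left] at hz
  rw [hthree]
  linear_combination hz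

/-- After splitting off the telescoping part `⟪K (x₂ - x₁), y - y₂⟫ - ⟪K (x₁ - x₀), y - y₁⟫`,
the three remaining coupling terms are each bounded by Young's inequality. -/
lemma coupling_le (K : E →L[ℝ] F) (α β : ℝ) (x x₀ x₁ x₂ : E) (y y₁ y₂ : F) :
    ⟪K x₂, y⟫ - ⟪K x, y₂⟫ + ⟪K (x - x₂), y₂ + β • (y₂ - y₁)⟫
        - ⟪K (x₁ + α • (x₁ - x₀)), y - y₂⟫
      ≤ ⟪K (x₂ - x₁), y - y₂⟫ - ⟪K (x₁ - x₀), y - y₁⟫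
        + ‖K‖ * (‖x₀ - x₁‖ ^ 2 + ‖y₁ - y₂‖ ^ 2)
        + ‖K‖ * β ^ 2 * ‖x - x₂‖ ^ 2 / 2 + ‖K‖ * (1 - α) ^ 2 * ‖y - y₂‖ ^ 2 / 2 := by
  have hsplit : ⟪K x₂, y⟫ - ⟪K x, y₂⟫ + ⟪K (x - x₂), y₂ + β • (y₂ - y₁)⟫
        - ⟪K (x₁ + α • (x₁ - x₀)), y - y₂⟫
      = ⟪K (x₂ - x₁), y - y₂⟫ - ⟪K (x₁ - x₀), y - y₁⟫
        + ⟪K (x₁ - x₀), (1 - α) • (y - y₂)⟫ + ⟪K (x₁ - x₀), y₂ - y₁⟫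
        + ⟪K (β • (x - x₂)), y₂ - y₁⟫ := by
    simp only [map_sub, map_add, map_smul, inner_sub_left, inner_sub_right, inner_add_left,
      inner_add_right, real_inner_smul_left, real_inner_smul_right]
    ring
  have h₁ := real_inner_apply_le_opNorm_mul_add_sq K (x₁ - x₀) ((1 - α) • (y - y₂))
  have h₂ := real_inner_apply_le_opNorm_mul_add_sq K (x₁ - x₀) (y₂ - y₁)
  have h₃ := real_inner_apply_le_opNorm_mul_add_sq K (β • (x - x₂)) (y₂ - y₁)
  simp only [norm_smul, mul_pow, Real.norm_eq_abs, sq_abs] at h₁ h₃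
  rw [norm_sub_rev x₁ x₀] at h₁ h₂
  rw [norm_sub_rev y₂ y₁] at h₂ h₃
  rw [hsplit]
  linear_combination h₁ + h₂ + h₃


/-- Only meaningful for `i ≥ 1`: at `i = 0` the truncated `i - 1` is `0`. -/
noncomputable def lyapunov (K : E →L[ℝ] F) (xs : ℕ → E) (ys : ℕ → F) (τs σs : ℕ → ℝ) (x : E)
    (y : F) (i : ℕ) : ℝ :=
  1 / (2 * τs i) * ‖x - xs i‖ ^ 2 + 1 / (2 * σs i) * ‖y - ys i‖ ^ 2
    - ⟪K (xs i - xs (i - 1)), y - ys i⟫ + ‖K‖ * ‖xs (i - 1) - xs i‖ ^ 2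

lemma lyapunov_le (K : E →L[ℝ] F) (xs : ℕ → E) (ys : ℕ → F) (τs σs : ℕ → ℝ) (x : E) (y : F)
    (i : ℕ) :
    lyapunov K xs ys τs σs x y i ≤ 1 / (2 * τs i) * ‖x - xs i‖ ^ 2
      + 1 / (2 * σs i) * ‖y - ys i‖ ^ 2 + ‖K‖ * ‖xs (i - 1) - xs i‖ ^ 2
      + |⟪K (xs i - xs (i - 1)), ys i - y⟫| := by
  have hflip : -⟪K (xs i - xs (i - 1)), y - ys i⟫ = ⟪K (xs i - xs (i - 1)), ys i - y⟫ := by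
    rw [← inner_neg_right, neg_sub]
  have habs := le_abs_self ⟪K (xs i - xs (i - 1)), ys i - y⟫
  unfold lyapunov
  linarith

lemma le_lyapunov_succ (K : E →L[ℝ] F) (xs : ℕ → E) (ys : ℕ → F) {τs : ℕ → ℝ} (σs : ℕ → ℝ)
    (x : E) (y : F) {k : ℕ} (hτ : 0 < τs k) :
    1 / (2 * τs (k + 1)) * ‖x - xs (k + 1)‖ ^ 2
      + (1 / (2 * σs (k + 1)) - ‖K‖ ^ 2 * τs k / 2) * ‖y - ys (k + 1)‖ ^ 2
      + (‖K‖ - 1 / (2 * τs k)) * ‖xs k - xs (k + 1)‖ ^ 2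
      ≤ lyapunov K xs ys τs σs x y (k + 1) := by
  have hyoung :=
    real_inner_apply_le_div_add_opNorm_sq_mul K (xs (k + 1) - xs k) (y - ys (k + 1)) hτ
  rw [norm_sub_rev] at hyoung
  unfold lyapunov
  rw [Nat.add_sub_cancel]
  linear_combination hyoung

lemma gap_add_lyapunov_succ_le [CompleteSpace E] [CompleteSpace F] {X : Set E} {Y : Set F}
    (K : E →L[ℝ] F) {g : E → ℝ} {h : F → ℝ}
    {f : E → F → ℝ} (hf : ∀ x y, f x y = ⟪K x, y⟫ + g x - h y)
    {xs : ℕ → E} {ys : ℕ → F} {τs σs αs βs : ℕ → ℝ} {xbs : ℕ → E} {ybs : ℕ → F}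
    (hxbS : ∀ k, xbs (k + 1) = xs (k + 1) + αs (k + 1) • (xs (k + 1) - xs k))
    (hybS : ∀ k, ybs (k + 1) = ys (k + 1) + βs k • (ys (k + 1) - ys k))
    (hiterx : ∀ k, ∀ x ∈ X,
      ⟪(τs k)⁻¹ • (xs k - xs (k + 1)) - (ContinuousLinearMap.adjoint K) (ybs (k + 1)),
        x - xs (k + 1)⟫ + g (xs (k + 1)) ≤ g x)
    (hitery : ∀ k, ∀ y ∈ Y,
      ⟪(σs k)⁻¹ • (ys k - ys (k + 1)) + K (xbs k), y - ys (k + 1)⟫ + h (ys (k + 1)) ≤ h y)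
    (hPCβ : ∀ i, ‖K‖ * βs i ^ 2 = 1 / τs i - 1 / τs (i + 1))
    (hPCα : ∀ i, ‖K‖ * (1 - αs i) ^ 2 = 1 / σs i - 1 / σs (i + 1))
    {x : E} (hx : x ∈ X) {y : F} (hy : y ∈ Y) {i : ℕ} (hi : 1 ≤ i) :
    f (xs (i + 1)) y - f x (ys (i + 1))
      - (‖K‖ - 1 / (2 * τs i)) * ‖xs i - xs (i + 1)‖ ^ 2
      - (‖K‖ - 1 / (2 * σs i)) * ‖ys i - ys (i + 1)‖ ^ 2
      + lyapunov K xs ys τs σs x y (i + 1) ≤ lyapunov K xs ys τs σs x y i := by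
  obtain ⟨j, rfl⟩ : ∃ j, i = j + 1 := ⟨i - 1, by omega⟩
  have hprimal := le_add_inner_of_prox_ineq (hiterx (j + 1) x hx)
  have hdual := le_add_inner_of_prox_ineq (w := -K (xbs (j + 1)))
    (by simpa only [sub_neg_eq_add] using hitery (j + 1) y hy)
  rw [ContinuousLinearMap.adjoint_inner_left, real_inner_comm, hybS] at hprimal
  rw [inner_neg_left, hxbS] at hdual
  have hcoupling := coupling_le K (αs (j + 1)) (βs (j + 1)) x (xs j) (xs (j + 1)) (xs (j + 1 + 1))
    y (ys (j + 1)) (ys (j + 1 + 1))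
  unfold lyapunov
  simp only [Nat.add_sub_cancel, hf]
  linear_combination hprimal + hdual + hcoupling + ‖x - xs (j + 1 + 1)‖ ^ 2 / 2 * hPCβ (j + 1)
    + ‖y - ys (j + 1 + 1)‖ ^ 2 / 2 * hPCα (j + 1)

end Estimates

/-- `αs i` stands for the paper's `α_{i-1}`. -/
theorem stmt_14_general
    {H₁ : Type*} [NormedAddCommGroup H₁] [InnerProductSpace ℝ H₁] [CompleteSpace H₁]
    {H₂ : Type*} [NormedAddCommGroup H₂] [InnerProductSpace ℝ H₂] [CompleteSpace H₂]
    (X : Set H₁) (Y : Set H₂)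
    (K : H₁ →L[ℝ] H₂) (g : H₁ → ℝ) (h : H₂ → ℝ)
    (f : H₁ → H₂ → ℝ)
    (hf : ∀ x y, f x y = ⟪K x, y⟫ + g x - h y)
    (xs : ℕ → H₁) (ys : ℕ → H₂)
    (τs σs : ℕ → ℝ) (hτ : ∀ k, 0 < τs k)
    (αs βs : ℕ → ℝ)
    (xbs : ℕ → H₁) (ybs : ℕ → H₂)
    (hxbS : ∀ k, xbs (k+1) = xs (k+1) + αs (k+1) • (xs (k+1) - xs k))
    (hybS : ∀ k, ybs (k+1) = ys (k+1) + βs k • (ys (k+1) - ys k))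
    (hiterx : ∀ k, ∀ x ∈ X,
      ⟪(τs k)⁻¹ • (xs k - xs (k+1)) - (ContinuousLinearMap.adjoint K) (ybs (k+1)),
        x - xs (k+1)⟫ + g (xs (k+1)) ≤ g x)
    (hitery : ∀ k, ∀ y ∈ Y,
      ⟪(σs k)⁻¹ • (ys k - ys (k+1)) + K (xbs k), y - ys (k+1)⟫ + h (ys (k+1)) ≤ h y)
    (hPCβ : ∀ i, ‖K‖ * (βs i)^2 = 1/(τs i) - 1/(τs (i+1)))
    (hPCα : ∀ i, ‖K‖ * (1 - αs i)^2 = 1/(σs i) - 1/(σs (i+1)))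
    (p k : ℕ) (hp : 1 ≤ p) (hpk : p ≤ k)
    (x : H₁) (hx : x ∈ X) (y : H₂) (hy : y ∈ Y) :
    ∑ i ∈ Finset.Icc p k, (f (xs (i+1)) y - f x (ys (i+1)))
      + (1/(2*τs (k+1))) * ‖x - xs (k+1)‖^2
      + (1/(2*σs (k+1)) - ‖K‖^2 * τs k / 2) * ‖y - ys (k+1)‖^2
      - ∑ i ∈ Finset.Icc p (k-1), (‖K‖ - 1/(2*τs i)) * ‖xs i - xs (i+1)‖^2
      - ∑ i ∈ Finset.Icc p k, (‖K‖ - 1/(2*σs i)) * ‖ys i - ys (i+1)‖^2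
      - ‖K‖ * ‖xs (p-1) - xs p‖^2
      - |⟪K (xs p - xs (p-1)), ys p - y⟫|
    ≤ (1/(2*τs p)) * ‖x - xs p‖^2 + (1/(2*σs p)) * ‖y - ys p‖^2 := by
  have htel := sum_Icc_add_le_of_forall_add_le hpk fun i hi =>
    gap_add_lyapunov_succ_le K hf hxbS hybS hiterx hitery hPCβ hPCα hx hy
      (hp.trans (mem_Icc.1 hi).1)
  rw [sum_sub_distrib, sum_sub_distrib] at htel
  have hsplit := sum_Icc_succ_top (show p ≤ k - 1 + 1 by omega)
    fun i => (‖K‖ - 1 / (2 * τs i)) * ‖xs i - xs (i + 1)‖ ^ 2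
  rw [Nat.sub_add_cancel (hp.trans hpk)] at hsplit
  linarith [lyapunov_le K xs ys τs σs x y p, le_lyapunov_succ K xs ys σs x y (hτ k)]

/-- Corollary 4.10: key estimate under the parameter conditions (PC).  Here `αs i` models
the shifted family `α_{i-1}`, so the extrapolation update for `x̄^{k+1}` uses
`αs (k+1) = α_k`, and (PC) reads `‖K‖·(1 − αs i)² = 1/σ_i − 1/σ_{i+1}`. -/
theorem stmt_14
    {H₁ : Type*} [NormedAddCommGroup H₁] [InnerProductSpace ℝ H₁] [CompleteSpace H₁]
    {H₂ : Type*} [NormedAddCommGroup H₂] [InnerProductSpace ℝ H₂] [CompleteSpace H₂]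
    (X : Set H₁) (Y : Set H₂)
    (hXne : X.Nonempty) (hXcl : IsClosed X) (hXcv : Convex ℝ X)
    (hYne : Y.Nonempty) (hYcl : IsClosed Y) (hYcv : Convex ℝ Y)
    (K : H₁ →L[ℝ] H₂) (g : H₁ → ℝ) (h : H₂ → ℝ)
    (hg : ConvexOn ℝ Set.univ g) (hglsc : LowerSemicontinuous g)
    (hh : ConvexOn ℝ Set.univ h) (hhlsc : LowerSemicontinuous h)
    (f : H₁ → H₂ → ℝ)
    (hf : ∀ x y, f x y = ⟪K x, y⟫ + g x - h y)
    (xs : ℕ → H₁) (ys : ℕ → H₂) (hxX : ∀ k, xs k ∈ X) (hyY : ∀ k, ys k ∈ Y)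
    (τs σs : ℕ → ℝ) (hτ : ∀ k, 0 < τs k) (hσ : ∀ k, 0 < σs k)
    (αs βs : ℕ → ℝ) (hα : ∀ k, 0 ≤ αs k) (hβ : ∀ k, 0 ≤ βs k)
    (xbs : ℕ → H₁) (ybs : ℕ → H₂)
    (hxb0 : xbs 0 = xs 0)
    (hxbS : ∀ k, xbs (k+1) = xs (k+1) + αs (k+1) • (xs (k+1) - xs k))
    (hyb0 : ybs 0 = ys 0)
    (hybS : ∀ k, ybs (k+1) = ys (k+1) + βs k • (ys (k+1) - ys k))
    (hiterx : ∀ k, ∀ x ∈ X,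
      ⟪(τs k)⁻¹ • (xs k - xs (k+1)) - (ContinuousLinearMap.adjoint K) (ybs (k+1)),
        x - xs (k+1)⟫ + g (xs (k+1)) ≤ g x)
    (hitery : ∀ k, ∀ y ∈ Y,
      ⟪(σs k)⁻¹ • (ys k - ys (k+1)) + K (xbs k), y - ys (k+1)⟫ + h (ys (k+1)) ≤ h y)
    (hPCβ : ∀ i, ‖K‖ * (βs i)^2 = 1/(τs i) - 1/(τs (i+1)))
    (hPCα : ∀ i, ‖K‖ * (1 - αs i)^2 = 1/(σs i) - 1/(σs (i+1)))
    (p k : ℕ) (hp : 1 ≤ p) (hpk : p ≤ k)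
    (x : H₁) (hx : x ∈ X) (y : H₂) (hy : y ∈ Y) :
    ∑ i ∈ Finset.Icc p k, (f (xs (i+1)) y - f x (ys (i+1)))
      + (1/(2*τs (k+1))) * ‖x - xs (k+1)‖^2
      + (1/(2*σs (k+1)) - ‖K‖^2 * τs k / 2) * ‖y - ys (k+1)‖^2
      - ∑ i ∈ Finset.Icc p (k-1), (‖K‖ - 1/(2*τs i)) * ‖xs i - xs (i+1)‖^2
      - ∑ i ∈ Finset.Icc p k, (‖K‖ - 1/(2*σs i)) * ‖ys i - ys (i+1)‖^2
      - ‖K‖ * ‖xs (p-1) - xs p‖^2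
      - |⟪K (xs p - xs (p-1)), ys p - y⟫|
    ≤ (1/(2*τs p)) * ‖x - xs p‖^2 + (1/(2*σs p)) * ‖y - ys p‖^2 :=
  stmt_14_general X Y K g h f hf xs ys τs σs hτ αs βs xbs ybs hxbS hybS hiterx hitery hPCβ hPCα p k
    hp hpk x hx y hy
end

section
/- Assume the parameter conditions (PC). Then for every k ∈ ℕ, x ∈ X and y ∈ Y: f(x̂_k, y) − f(x, ŷ_k) ≤ (1/(2(k+1)))( ‖x − x⁰‖²/τ₀ − ‖x − x^{k+1}‖²/τ_{k+1} + ‖y − y⁰‖²/σ₀ ) − (1/(k+1))(1/(2σ_{k+1}) − ‖K‖²·τ_k/2)‖y − y^{k+1}‖² + (1/(k+1)) ∑_{i=0}^{k−1} (‖K‖ − 1/(2τ_i))‖x^i − x^{i+1}‖² + (1/(k+1)) ∑_{i=0}^{k} (‖K‖ − 1/(2σ_i))‖y^i − y^{i+1}‖². -/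
open RealInnerProductSpace

section helpers
variable {H₁ : Type*} [NormedAddCommGroup H₁] [InnerProductSpace ℝ H₁]
variable {H₂ : Type*} [NormedAddCommGroup H₂] [InnerProductSpace ℝ H₂]

lemma inner_three (a b c : H₁) :
    ⟪a - b, c - b⟫ = (‖a - b‖^2 + ‖c - b‖^2 - ‖c - a‖^2) / 2 := by
  have h3 : ‖c - a‖ = ‖(c - b) - (a - b)‖ := by rw [show c - a = (c - b) - (a - b) by abel]
  have h4 := norm_sub_sq_real (c - b) (a - b)
  have h5 : ⟪a - b, c - b⟫ = ⟪c - b, a - b⟫ := real_inner_comm _ _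
  rw [h3, h5]
  linarith

lemma keyCS (K : H₁ →L[ℝ] H₂) (u : H₁) (v : H₂) : ⟪K u, v⟫ ≤ ‖K‖ * ‖u‖ * ‖v‖ := by
  calc ⟪K u, v⟫ ≤ ‖K u‖ * ‖v‖ := real_inner_le_norm _ _
    _ ≤ ‖K‖ * ‖u‖ * ‖v‖ := by gcongr; exact K.le_opNorm u

lemma keyCSabs (K : H₁ →L[ℝ] H₂) (c : ℝ) (u : H₁) (v : H₂) :
    c * ⟪K u, v⟫ ≤ ‖K‖ * (|c| * ‖u‖ * ‖v‖) := by
  calc c * ⟪K u, v⟫ ≤ |c * ⟪K u, v⟫| := le_abs_self _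
    _ = |c| * |⟪K u, v⟫| := abs_mul _ _
    _ ≤ |c| * (‖K u‖ * ‖v‖) := by
        gcongr
        exact abs_real_inner_le_norm _ _
    _ ≤ |c| * (‖K‖ * ‖u‖ * ‖v‖) := by gcongr; exact K.le_opNorm u
    _ = ‖K‖ * (|c| * ‖u‖ * ‖v‖) := by ring

lemma young_abs (c a b : ℝ) : 2 * (|c| * a * b) ≤ a^2 + c^2 * b^2 := by
  rw [← sq_abs c]
  nlinarith [sq_nonneg (a - |c| * b)]

/-- Young split, weight on `v`. -/
lemma keyK (K : H₁ →L[ℝ] H₂) (c : ℝ) (u : H₁) (v : H₂) :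
    c * ⟪K u, v⟫ ≤ ‖K‖/2 * ‖u‖^2 + c^2 * ‖K‖/2 * ‖v‖^2 := by
  have h1 := keyCSabs K c u v
  have key := young_abs c ‖u‖ ‖v‖
  calc c * ⟪K u, v⟫ ≤ ‖K‖ * (|c| * ‖u‖ * ‖v‖) := h1
    _ = ‖K‖ * (2 * (|c| * ‖u‖ * ‖v‖)) / 2 := by ring
    _ ≤ ‖K‖ * (‖u‖^2 + c^2 * ‖v‖^2) / 2 := by gcongr
    _ = ‖K‖/2 * ‖u‖^2 + c^2 * ‖K‖/2 * ‖v‖^2 := by ring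

/-- Young split, weight on `u`. -/
lemma keyK2 (K : H₁ →L[ℝ] H₂) (c : ℝ) (u : H₁) (v : H₂) :
    c * ⟪K u, v⟫ ≤ c^2 * ‖K‖/2 * ‖u‖^2 + ‖K‖/2 * ‖v‖^2 := by
  have h1 := keyCSabs K c u v
  have key := young_abs c ‖v‖ ‖u‖
  calc c * ⟪K u, v⟫ ≤ ‖K‖ * (|c| * ‖u‖ * ‖v‖) := h1
    _ = ‖K‖ * (2 * (|c| * ‖v‖ * ‖u‖)) / 2 := by ring
    _ ≤ ‖K‖ * (‖v‖^2 + c^2 * ‖u‖^2) / 2 := by gcongr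
    _ = c^2 * ‖K‖/2 * ‖u‖^2 + ‖K‖/2 * ‖v‖^2 := by ring

/-- Young split with step-size weight. -/
lemma keyT (K : H₁ →L[ℝ] H₂) (t : ℝ) (ht : 0 < t) (u : H₁) (v : H₂) :
    ⟪K u, v⟫ ≤ 1/(2*t) * ‖u‖^2 + ‖K‖^2 * t/2 * ‖v‖^2 := by
  have h1 := keyCS K u v
  have h2 : ‖K‖ * ‖u‖ * ‖v‖ ≤ 1/(2*t) * ‖u‖^2 + ‖K‖^2 * t/2 * ‖v‖^2 := by
    rw [← sub_nonneg]
    have heq : 1/(2*t) * ‖u‖^2 + ‖K‖^2 * t/2 * ‖v‖^2 - ‖K‖ * ‖u‖ * ‖v‖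
        = (‖u‖ - t * ‖K‖ * ‖v‖)^2 / (2*t) := by
      field_simp
      ring
    rw [heq]
    positivity
  linarith

end helpers


set_option maxHeartbeats 2000000 in
/-- Lemma 4.12: ergodic gap estimate under the parameter conditions (PC).  Here `αs i` models
the shifted family `α_{i-1}`, so the extrapolation update for `x̄^{k+1}` uses
`αs (k+1) = α_k`, and (PC) reads `‖K‖·(1 − αs i)² = 1/σ_i − 1/σ_{i+1}`. -/
theorem stmt_15
    {H₁ : Type*} [NormedAddCommGroup H₁] [InnerProductSpace ℝ H₁] [CompleteSpace H₁]
    {H₂ : Type*} [NormedAddCommGroup H₂] [InnerProductSpace ℝ H₂] [CompleteSpace H₂]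
    (X : Set H₁) (Y : Set H₂)
    (hXne : X.Nonempty) (hXcl : IsClosed X) (hXcv : Convex ℝ X)
    (hYne : Y.Nonempty) (hYcl : IsClosed Y) (hYcv : Convex ℝ Y)
    (K : H₁ →L[ℝ] H₂) (g : H₁ → ℝ) (h : H₂ → ℝ)
    (hg : ConvexOn ℝ Set.univ g) (hglsc : LowerSemicontinuous g)
    (hh : ConvexOn ℝ Set.univ h) (hhlsc : LowerSemicontinuous h)
    (f : H₁ → H₂ → ℝ)
    (hf : ∀ x y, f x y = ⟪K x, y⟫ + g x - h y)
    (xs : ℕ → H₁) (ys : ℕ → H₂) (hxX : ∀ k, xs k ∈ X) (hyY : ∀ k, ys k ∈ Y)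
    (τs σs : ℕ → ℝ) (hτ : ∀ k, 0 < τs k) (hσ : ∀ k, 0 < σs k)
    (αs βs : ℕ → ℝ) (hα : ∀ k, 0 ≤ αs k) (hβ : ∀ k, 0 ≤ βs k)
    (xbs : ℕ → H₁) (ybs : ℕ → H₂)
    (hxb0 : xbs 0 = xs 0)
    (hxbS : ∀ k, xbs (k+1) = xs (k+1) + αs (k+1) • (xs (k+1) - xs k))
    (hyb0 : ybs 0 = ys 0)
    (hybS : ∀ k, ybs (k+1) = ys (k+1) + βs k • (ys (k+1) - ys k))
    (hiterx : ∀ k, ∀ x ∈ X,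
      ⟪(τs k)⁻¹ • (xs k - xs (k+1)) - (ContinuousLinearMap.adjoint K) (ybs (k+1)),
        x - xs (k+1)⟫ + g (xs (k+1)) ≤ g x)
    (hitery : ∀ k, ∀ y ∈ Y,
      ⟪(σs k)⁻¹ • (ys k - ys (k+1)) + K (xbs k), y - ys (k+1)⟫ + h (ys (k+1)) ≤ h y)
    (hPCβ : ∀ i, ‖K‖ * (βs i)^2 = 1/(τs i) - 1/(τs (i+1)))
    (hPCα : ∀ i, ‖K‖ * (1 - αs i)^2 = 1/(σs i) - 1/(σs (i+1)))
    (k : ℕ) (x : H₁) (hx : x ∈ X) (y : H₂) (hy : y ∈ Y) :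
    f ((((k : ℝ)+1)⁻¹) • ∑ i ∈ Finset.range (k+1), xs (i+1)) y
      - f x ((((k : ℝ)+1)⁻¹) • ∑ i ∈ Finset.range (k+1), ys (i+1))
    ≤ (1/(2*((k : ℝ)+1))) * (‖x - xs 0‖^2 / τs 0 - ‖x - xs (k+1)‖^2 / τs (k+1)
        + ‖y - ys 0‖^2 / σs 0)
      - (((k : ℝ)+1)⁻¹) * (1/(2*σs (k+1)) - ‖K‖^2 * τs k / 2) * ‖y - ys (k+1)‖^2
      + (((k : ℝ)+1)⁻¹) * ∑ i ∈ Finset.range k, (‖K‖ - 1/(2*τs i)) * ‖xs i - xs (i+1)‖^2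
      + (((k : ℝ)+1)⁻¹) * ∑ i ∈ Finset.range (k+1), (‖K‖ - 1/(2*σs i)) * ‖ys i - ys (i+1)‖^2 := by
  have hK0 : (0:ℝ) ≤ ‖K‖ := norm_nonneg _
  have hx1 : ∀ i, g (xs (i+1)) - g x ≤
      ⟪K (x - xs (i+1)), ys (i+1) + βs i • (ys (i+1) - ys i)⟫
      + (‖x - xs i‖^2 - ‖x - xs (i+1)‖^2 - ‖xs i - xs (i+1)‖^2) / (2 * τs i) := by
    intro i
    have h1 := hiterx i x hx
    rw [inner_sub_left, real_inner_smul_left, ContinuousLinearMap.adjoint_inner_left,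
      inner_three (xs i) (xs (i+1)) x] at h1
    have h5 : ⟪ybs (i+1), K (x - xs (i+1))⟫ = ⟪K (x - xs (i+1)), ybs (i+1)⟫ :=
      real_inner_comm _ _
    rw [h5, hybS i] at h1
    have hτi := (hτ i).ne'
    have heq : (τs i)⁻¹ * ((‖xs i - xs (i+1)‖^2 + ‖x - xs (i+1)‖^2 - ‖x - xs i‖^2) / 2)
        = -((‖x - xs i‖^2 - ‖x - xs (i+1)‖^2 - ‖xs i - xs (i+1)‖^2) / (2 * τs i)) := by
      field_simp
      ring
    rw [heq] at h1
    linarith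
  have hy1 : ∀ i, h (ys (i+1)) - h y ≤
      -⟪K (xbs i), y - ys (i+1)⟫
      + (‖y - ys i‖^2 - ‖y - ys (i+1)‖^2 - ‖ys i - ys (i+1)‖^2) / (2 * σs i) := by
    intro i
    have h1 := hitery i y hy
    rw [inner_add_left, real_inner_smul_left,
      inner_three (ys i) (ys (i+1)) y] at h1
    have hσi := (hσ i).ne'
    have heq : (σs i)⁻¹ * ((‖ys i - ys (i+1)‖^2 + ‖y - ys (i+1)‖^2 - ‖y - ys i‖^2) / 2)
        = -((‖y - ys i‖^2 - ‖y - ys (i+1)‖^2 - ‖ys i - ys (i+1)‖^2) / (2 * σs i)) := by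
      field_simp
      ring
    rw [heq] at h1
    linarith
  -- cross identity
  have hcross : ∀ i, ⟪K (xs (i+1)), y⟫ - ⟪K x, ys (i+1)⟫
      + ⟪K (x - xs (i+1)), ys (i+1) + βs i • (ys (i+1) - ys i)⟫
      - ⟪K (xbs i), y - ys (i+1)⟫
      = ⟪K (xs (i+1)) - K (xbs i), y - ys (i+1)⟫
        + βs i * ⟪K (x - xs (i+1)), ys (i+1) - ys i⟫ := by
    intro i
    simp only [map_sub, map_add, map_smul, inner_sub_left, inner_sub_right, inner_add_left,
      inner_add_right, real_inner_smul_left, real_inner_smul_right]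
    ring
  -- per-step gap bound
  have hG : ∀ i, f (xs (i+1)) y - f x (ys (i+1)) ≤
      ⟪K (xs (i+1)) - K (xbs i), y - ys (i+1)⟫
      + βs i * ⟪K (x - xs (i+1)), ys (i+1) - ys i⟫
      + (‖x - xs i‖^2 - ‖x - xs (i+1)‖^2 - ‖xs i - xs (i+1)‖^2) / (2 * τs i)
      + (‖y - ys i‖^2 - ‖y - ys (i+1)‖^2 - ‖ys i - ys (i+1)‖^2) / (2 * σs i) := by
    intro i
    have h1 := hx1 i
    have h2 := hy1 i
    have h3 := hcross i
    rw [hf, hf]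
    linarith
  -- slack expansions via PC
  have hRx : ∀ i, (‖x - xs i‖^2 - ‖x - xs (i+1)‖^2 - ‖xs i - xs (i+1)‖^2) / (2 * τs i)
      = ‖x - xs i‖^2/(2*τs i) - ‖x - xs (i+1)‖^2/(2*τs (i+1))
        - (βs i)^2 * ‖K‖/2 * ‖x - xs (i+1)‖^2 - 1/(2*τs i) * ‖xs i - xs (i+1)‖^2 := by
    intro i
    have hPC := hPCβ i
    have h1 := (hτ i).ne'
    have h2 := (hτ (i+1)).ne'
    have hslack : (βs i)^2 * ‖K‖ = 1/(τs i) - 1/(τs (i+1)) := by rw [← hPC]; ring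
    rw [hslack]
    field_simp
    ring
  have hRy : ∀ i, (‖y - ys i‖^2 - ‖y - ys (i+1)‖^2 - ‖ys i - ys (i+1)‖^2) / (2 * σs i)
      = ‖y - ys i‖^2/(2*σs i) - ‖y - ys (i+1)‖^2/(2*σs (i+1))
        - (1 - αs i)^2 * ‖K‖/2 * ‖y - ys (i+1)‖^2 - 1/(2*σs i) * ‖ys i - ys (i+1)‖^2 := by
    intro i
    have hPC := hPCα i
    have h1 := (hσ i).ne'
    have h2 := (hσ (i+1)).ne'
    have hslack : (1 - αs i)^2 * ‖K‖ = 1/(σs i) - 1/(σs (i+1)) := by rw [← hPC]; ring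
    rw [hslack]
    field_simp
    ring
  -- main induction
  have hInv : ∀ n : ℕ, ∑ i ∈ Finset.range (n+1), (f (xs (i+1)) y - f x (ys (i+1)))
      ≤ ‖x - xs 0‖^2/(2*τs 0) - ‖x - xs (n+1)‖^2/(2*τs (n+1))
        + ‖y - ys 0‖^2/(2*σs 0) - ‖y - ys (n+1)‖^2/(2*σs (n+1))
        + ⟪K (xs (n+1) - xs n), y - ys (n+1)⟫ - 1/(2*τs n) * ‖xs n - xs (n+1)‖^2
        + ∑ i ∈ Finset.range n, (‖K‖ - 1/(2*τs i)) * ‖xs i - xs (i+1)‖^2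
        + ∑ i ∈ Finset.range (n+1), (‖K‖ - 1/(2*σs i)) * ‖ys i - ys (i+1)‖^2 := by
    intro n
    induction n with
    | zero =>
      have h1 := hG 0
      rw [hRx 0, hRy 0, hxb0] at h1
      simp only [Finset.sum_range_one, Finset.sum_range_zero, zero_add] at h1 ⊢
      have hb3 := keyK2 K (βs 0) (x - xs 1) (ys 1 - ys 0)
      have hid : ⟪K (xs 1) - K (xs 0), y - ys 1⟫ = ⟪K (xs 1 - xs 0), y - ys 1⟫ := by
        rw [map_sub]
      have hnn : 0 ≤ (1 - αs 0)^2 * ‖K‖/2 * ‖y - ys 1‖^2 := by positivity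
      have hrev : ‖ys 1 - ys 0‖^2 = ‖ys 0 - ys 1‖^2 := by rw [norm_sub_rev]
      have hKq : 0 ≤ ‖K‖/2 * ‖ys 0 - ys 1‖^2 := by positivity
      rw [hid] at h1
      rw [hrev] at hb3
      linarith
    | succ n ih =>
      have h1 := hG (n+1)
      rw [hRx (n+1), hRy (n+1), hxbS n] at h1
      -- split extrapolated cross term
      have hid1 : ⟪K (xs (n+1+1)) - K (xs (n+1) + αs (n+1) • (xs (n+1) - xs n)), y - ys (n+1+1)⟫
          = ⟪K (xs (n+2) - xs (n+1)), y - ys (n+2)⟫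
            - αs (n+1) * ⟪K (xs (n+1) - xs n), y - ys (n+2)⟫ := by
        simp only [map_sub, map_add, map_smul, inner_sub_left, inner_sub_right, inner_add_left,
          inner_add_right, real_inner_smul_left, real_inner_smul_right]
        ring
      rw [hid1] at h1
      -- split carried cross term
      have hid2 : ⟪K (xs (n+1) - xs n), y - ys (n+1)⟫
          = ⟪K (xs (n+1) - xs n), y - ys (n+2)⟫
            + ⟪K (xs (n+1) - xs n), ys (n+2) - ys (n+1)⟫ := by
        rw [← inner_add_right]
        congr 1
        abel
      -- bounds
      have hb1 := keyK K (1 - αs (n+1)) (xs (n+1) - xs n) (y - ys (n+2))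
      have hb2 := keyK K 1 (xs (n+1) - xs n) (ys (n+2) - ys (n+1))
      have hb3 := keyK2 K (βs (n+1)) (x - xs (n+2)) (ys (n+2) - ys (n+1))
      rw [one_mul] at hb2
      have hrev1 : ‖xs (n+1) - xs n‖^2 = ‖xs n - xs (n+1)‖^2 := by rw [norm_sub_rev]
      have hrev2 : ‖ys (n+2) - ys (n+1)‖^2 = ‖ys (n+1) - ys (n+2)‖^2 := by rw [norm_sub_rev]
      rw [hrev1] at hb1 hb2
      rw [hrev2] at hb2 hb3
      -- extend the sums
      rw [Finset.sum_range_succ (fun i => f (xs (i+1)) y - f x (ys (i+1))) (n+1),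
        Finset.sum_range_succ (fun i => (‖K‖ - 1/(2*τs i)) * ‖xs i - xs (i+1)‖^2) n,
        Finset.sum_range_succ (fun i => (‖K‖ - 1/(2*σs i)) * ‖ys i - ys (i+1)‖^2) (n+1)]
      have e1 : (1 - αs (n+1)) * ⟪K (xs (n+1) - xs n), y - ys (n+2)⟫
          = ⟪K (xs (n+1) - xs n), y - ys (n+2)⟫
            - αs (n+1) * ⟪K (xs (n+1) - xs n), y - ys (n+2)⟫ := by ring
      rw [e1] at hb1
      linarith
  -- final bound on the carried cross term
  have hfin := hInv k
  have hcarry := keyT K (τs k) (hτ k) (xs (k+1) - xs k) (y - ys (k+1))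
  have hrevc : ‖xs (k+1) - xs k‖^2 = ‖xs k - xs (k+1)‖^2 := by rw [norm_sub_rev]
  rw [hrevc] at hcarry
  have hsum : ∑ i ∈ Finset.range (k+1), (f (xs (i+1)) y - f x (ys (i+1)))
      ≤ ‖x - xs 0‖^2/(2*τs 0) - ‖x - xs (k+1)‖^2/(2*τs (k+1))
        + ‖y - ys 0‖^2/(2*σs 0)
        - (1/(2*σs (k+1)) - ‖K‖^2 * τs k / 2) * ‖y - ys (k+1)‖^2
        + ∑ i ∈ Finset.range k, (‖K‖ - 1/(2*τs i)) * ‖xs i - xs (i+1)‖^2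
        + ∑ i ∈ Finset.range (k+1), (‖K‖ - 1/(2*σs i)) * ‖ys i - ys (i+1)‖^2 := by
    have hgexp : (1/(2*σs (k+1)) - ‖K‖^2 * τs k / 2) * ‖y - ys (k+1)‖^2
        = ‖y - ys (k+1)‖^2/(2*σs (k+1)) - ‖K‖^2 * τs k/2 * ‖y - ys (k+1)‖^2 := by ring
    rw [hgexp]
    linarith [hfin, hcarry]
  -- convexity / averaging step
  have hk1 : (0:ℝ) < (k:ℝ)+1 := by positivity
  have hkn0 : ((k:ℝ)+1) ≠ 0 := hk1.ne'
  have hw : ∑ _i ∈ Finset.range (k+1), ((k:ℝ)+1)⁻¹ = 1 := by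
    rw [Finset.sum_const, Finset.card_range, nsmul_eq_mul]
    push_cast
    field_simp
  have hg1 : g ((((k : ℝ)+1)⁻¹) • ∑ i ∈ Finset.range (k+1), xs (i+1))
      ≤ ((k:ℝ)+1)⁻¹ * ∑ i ∈ Finset.range (k+1), g (xs (i+1)) := by
    rw [Finset.smul_sum, Finset.mul_sum]
    have := hg.map_sum_le (t := Finset.range (k+1)) (w := fun _ => ((k:ℝ)+1)⁻¹)
      (p := fun i => xs (i+1)) (fun i _ => by positivity) hw (fun i _ => Set.mem_univ _)
    simpa using this
  have hh1 : h ((((k : ℝ)+1)⁻¹) • ∑ i ∈ Finset.range (k+1), ys (i+1))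
      ≤ ((k:ℝ)+1)⁻¹ * ∑ i ∈ Finset.range (k+1), h (ys (i+1)) := by
    rw [Finset.smul_sum, Finset.mul_sum]
    have := hh.map_sum_le (t := Finset.range (k+1)) (w := fun _ => ((k:ℝ)+1)⁻¹)
      (p := fun i => ys (i+1)) (fun i _ => by positivity) hw (fun i _ => Set.mem_univ _)
    simpa using this
  have hinner1 : ⟪K ((((k : ℝ)+1)⁻¹) • ∑ i ∈ Finset.range (k+1), xs (i+1)), y⟫
      = ((k:ℝ)+1)⁻¹ * ∑ i ∈ Finset.range (k+1), ⟪K (xs (i+1)), y⟫ := by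
    rw [map_smul, real_inner_smul_left, map_sum, sum_inner]
  have hinner2 : ⟪K x, (((k : ℝ)+1)⁻¹) • ∑ i ∈ Finset.range (k+1), ys (i+1)⟫
      = ((k:ℝ)+1)⁻¹ * ∑ i ∈ Finset.range (k+1), ⟪K x, ys (i+1)⟫ := by
    rw [real_inner_smul_right, inner_sum]
  have hsumid : ∑ i ∈ Finset.range (k+1), (f (xs (i+1)) y - f x (ys (i+1)))
      = ∑ i ∈ Finset.range (k+1), ⟪K (xs (i+1)), y⟫
        + ∑ i ∈ Finset.range (k+1), g (xs (i+1)) - ((k:ℝ)+1) * h y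
        - (∑ i ∈ Finset.range (k+1), ⟪K x, ys (i+1)⟫ + ((k:ℝ)+1) * g x
            - ∑ i ∈ Finset.range (k+1), h (ys (i+1))) := by
    simp only [hf]
    rw [Finset.sum_sub_distrib, Finset.sum_sub_distrib, Finset.sum_sub_distrib,
      Finset.sum_add_distrib, Finset.sum_add_distrib, Finset.sum_const, Finset.sum_const,
      Finset.card_range, nsmul_eq_mul]
    push_cast
    ring
  have hmain : ((k:ℝ)+1)⁻¹ * ∑ i ∈ Finset.range (k+1), (f (xs (i+1)) y - f x (ys (i+1)))
      ≤ (1/(2*((k : ℝ)+1))) * (‖x - xs 0‖^2 / τs 0 - ‖x - xs (k+1)‖^2 / τs (k+1)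
          + ‖y - ys 0‖^2 / σs 0)
        - (((k : ℝ)+1)⁻¹) * (1/(2*σs (k+1)) - ‖K‖^2 * τs k / 2) * ‖y - ys (k+1)‖^2
        + (((k : ℝ)+1)⁻¹) * ∑ i ∈ Finset.range k, (‖K‖ - 1/(2*τs i)) * ‖xs i - xs (i+1)‖^2
        + (((k : ℝ)+1)⁻¹) * ∑ i ∈ Finset.range (k+1),
            (‖K‖ - 1/(2*σs i)) * ‖ys i - ys (i+1)‖^2 := by
    calc ((k:ℝ)+1)⁻¹ * ∑ i ∈ Finset.range (k+1), (f (xs (i+1)) y - f x (ys (i+1)))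
        ≤ ((k:ℝ)+1)⁻¹ * (‖x - xs 0‖^2/(2*τs 0) - ‖x - xs (k+1)‖^2/(2*τs (k+1))
            + ‖y - ys 0‖^2/(2*σs 0)
            - (1/(2*σs (k+1)) - ‖K‖^2 * τs k / 2) * ‖y - ys (k+1)‖^2
            + ∑ i ∈ Finset.range k, (‖K‖ - 1/(2*τs i)) * ‖xs i - xs (i+1)‖^2
            + ∑ i ∈ Finset.range (k+1), (‖K‖ - 1/(2*σs i)) * ‖ys i - ys (i+1)‖^2) :=
          mul_le_mul_of_nonneg_left hsum (by positivity)
      _ = _ := by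
          field_simp
  have hcast : ((k:ℝ)+1)⁻¹ * (∑ i ∈ Finset.range (k+1), ⟪K (xs (i+1)), y⟫
        + ∑ i ∈ Finset.range (k+1), g (xs (i+1)) - ((k:ℝ)+1) * h y
        - (∑ i ∈ Finset.range (k+1), ⟪K x, ys (i+1)⟫ + ((k:ℝ)+1) * g x
            - ∑ i ∈ Finset.range (k+1), h (ys (i+1))))
      = ((k:ℝ)+1)⁻¹ * ∑ i ∈ Finset.range (k+1), ⟪K (xs (i+1)), y⟫
        + ((k:ℝ)+1)⁻¹ * ∑ i ∈ Finset.range (k+1), g (xs (i+1)) - h y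
        - (((k:ℝ)+1)⁻¹ * ∑ i ∈ Finset.range (k+1), ⟪K x, ys (i+1)⟫ + g x
            - ((k:ℝ)+1)⁻¹ * ∑ i ∈ Finset.range (k+1), h (ys (i+1))) := by
    field_simp
  rw [hf, hf]
  rw [hsumid, hcast] at hmain
  linarith [hg1, hh1, hmain, hinner1.ge, hinner1.le, hinner2.ge, hinner2.le]
end

section
/- Suppose (x*, y*) is a saddle-point of f and assume the parameter conditions (PC). Then for every k ∈ ℕ: (1/(2τ_{k+1}))‖x* − x^{k+1}‖² + (1/(2σ_{k+1}) − ‖K‖²·τ_k/2)‖y* − y^{k+1}‖² + ∑_{i=0}^{k−1} (1/(2τ_i) − ‖K‖)‖x^i − x^{i+1}‖² + ∑_{i=0}^{k} (1/(2σ_i) − ‖K‖)‖y^i − y^{i+1}‖² ≤ (1/(2τ₀))‖x* − x⁰‖² + (1/(2σ₀))‖y* − y⁰‖². -/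
/-!
Testing the two variational inequalities of step `i` at `(x*, y*)` and adding the saddle-point
inequality `f(x*, y^{i+1}) ≤ f(x^{i+1}, y*)` eliminates `g` and `h`; the three-point identity then
bounds the change of the weighted squared distances to `(x*, y*)` by bilinear terms in `K`. Writing
`x̄^i - x^{i+1}` through the new step `x^i - x^{i+1}` and the previous one `x^{i-1} - x^i`, every
bilinear term is bounded by Young's inequality with constant `‖K‖`, and (PC) says precisely that
the resulting quadratic terms are absorbed by the decrease of `1/τ` and `1/σ`. So the energy
`‖x* - x^i‖²/(2τ_i) + ‖y* - y^i‖²/(2σ_i) + ‖K‖‖x^{i-1} - x^i‖² - ⟪K(x^{i-1} - x^i), y^i - y*⟫`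
drops by at least the `i`-th summands of the estimate; telescoping, and one more Young inequality
for the cross term of the last energy, give the claim.
-/

open RealInnerProductSpace

section

variable {E F : Type*} [NormedAddCommGroup E] [InnerProductSpace ℝ E]
  [NormedAddCommGroup F] [InnerProductSpace ℝ F]

lemma real_inner_sub_sub_eq (u v w : E) :
    ⟪u - w, v - w⟫ = (‖u - w‖ ^ 2 + ‖v - w‖ ^ 2 - ‖u - v‖ ^ 2) / 2 := by
  rw [real_inner_eq_norm_mul_self_add_norm_mul_self_sub_norm_sub_mul_self_div_two,
    sub_sub_sub_cancel_right]
  ring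

lemma inner_apply_le_half_opNorm (K : E →L[ℝ] F) (u : E) (v : F) :
    ⟪K u, v⟫ ≤ ‖K‖ / 2 * (‖u‖ ^ 2 + ‖v‖ ^ 2) := by
  calc ⟪K u, v⟫ ≤ ‖K‖ * (‖u‖ * ‖v‖) := by
        grw [real_inner_le_norm, K.le_opNorm, mul_assoc]
    _ ≤ ‖K‖ / 2 * (‖u‖ ^ 2 + ‖v‖ ^ 2) := by
        have := two_mul_le_add_sq ‖u‖ ‖v‖
        nlinarith [norm_nonneg K]

lemma mul_inner_apply_le_left (K : E →L[ℝ] F) (c : ℝ) (u : E) (v : F) :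
    c * ⟪K u, v⟫ ≤ ‖K‖ / 2 * (c ^ 2 * ‖u‖ ^ 2 + ‖v‖ ^ 2) := by
  simpa [real_inner_smul_left, norm_smul, mul_pow] using inner_apply_le_half_opNorm K (c • u) v

lemma mul_inner_apply_le_right (K : E →L[ℝ] F) (c : ℝ) (u : E) (v : F) :
    c * ⟪K u, v⟫ ≤ ‖K‖ / 2 * (‖u‖ ^ 2 + c ^ 2 * ‖v‖ ^ 2) := by
  simpa [real_inner_smul_right, norm_smul, mul_pow] using inner_apply_le_half_opNorm K u (c • v)

lemma inner_apply_le_young (K : E →L[ℝ] F) {t : ℝ} (ht : 0 < t) (u : E) (v : F) :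
    ⟪K u, v⟫ ≤ 1 / (2 * t) * ‖u‖ ^ 2 + ‖K‖ ^ 2 * t / 2 * ‖v‖ ^ 2 := by
  have hsq : 0 ≤ 1 / (2 * t) * (‖u‖ - t * ‖K‖ * ‖v‖) ^ 2 := by positivity
  calc ⟪K u, v⟫ ≤ ‖K‖ * ‖u‖ * ‖v‖ := by grw [real_inner_le_norm, K.le_opNorm]
    _ ≤ 1 / (2 * t) * ‖u‖ ^ 2 + ‖K‖ ^ 2 * t / 2 * ‖v‖ ^ 2 := by
        have : 1 / (2 * t) * (‖u‖ - t * ‖K‖ * ‖v‖) ^ 2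
            = 1 / (2 * t) * ‖u‖ ^ 2 + ‖K‖ ^ 2 * t / 2 * ‖v‖ ^ 2 - ‖K‖ * ‖u‖ * ‖v‖ := by
          field_simp; ring
        linarith

lemma add_sum_range_le_of_succ_add_le {u d : ℕ → ℝ} (h : ∀ i, u (i + 1) + d i ≤ u i) (n : ℕ) :
    u n + ∑ i ∈ Finset.range n, d i ≤ u 0 := by
  calc u n + ∑ i ∈ Finset.range n, d i ≤ u n + ∑ i ∈ Finset.range n, (u i - u (i + 1)) := by
        gcongr with i; linarith [h i]
    _ = u 0 := by rw [Finset.sum_range_sub']; ring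

/-- `x^{i-1} - x^i`, taken to be `0` at `i = 0` so that `x̄^i = x^i - α_i • prevStep xs i`
holds for every `i`. -/
def prevStep (xs : ℕ → E) : ℕ → E
  | 0 => 0
  | i + 1 => xs i - xs (i + 1)

lemma eq_sub_smul_prevStep {xs xbs : ℕ → E} {αs : ℕ → ℝ} (h0 : xbs 0 = xs 0)
    (hS : ∀ k, xbs (k + 1) = xs (k + 1) + αs (k + 1) • (xs (k + 1) - xs k)) (i : ℕ) :
    xbs i = xs i - αs i • prevStep xs i := by
  cases i with
  | zero => simp [prevStep, h0]
  | succ k => rw [hS, prevStep]; module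

noncomputable def pdEnergy (K : E →L[ℝ] F) (xstar : E) (ystar : F) (τ σ : ℝ) (x : E) (y : F)
    (p : E) : ℝ :=
  1 / (2 * τ) * ‖xstar - x‖ ^ 2 + 1 / (2 * σ) * ‖ystar - y‖ ^ 2 + ‖K‖ * ‖p‖ ^ 2
    - ⟪K p, y - ystar⟫

lemma primal_dual_step_le [CompleteSpace E] [CompleteSpace F] (K : E →L[ℝ] F) (g : E → ℝ)
    (h : F → ℝ) {τ σ : ℝ} {x x' xb xstar : E} {y y' yb' ystar : F}
    (hx : ⟪τ⁻¹ • (x - x') - K.adjoint yb', xstar - x'⟫ + g x' ≤ g xstar)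
    (hy : ⟪σ⁻¹ • (y - y') + K xb, ystar - y'⟫ + h y' ≤ h ystar)
    (hgap : ⟪K xstar, y'⟫ + g xstar - h y' ≤ ⟪K x', ystar⟫ + g x' - h ystar) :
    1 / (2 * τ) * (‖xstar - x'‖ ^ 2 + ‖x - x'‖ ^ 2 - ‖xstar - x‖ ^ 2)
      + 1 / (2 * σ) * (‖ystar - y'‖ ^ 2 + ‖y - y'‖ ^ 2 - ‖ystar - y‖ ^ 2)
      ≤ ⟪K (xb - x'), y' - ystar⟫ + ⟪K (xstar - x'), yb' - y'⟫ := by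
  rw [inner_sub_left, real_inner_smul_left, ContinuousLinearMap.adjoint_inner_left,
    real_inner_comm (K (xstar - x')), real_inner_sub_sub_eq, norm_sub_rev x xstar] at hx
  rw [inner_add_left, real_inner_smul_left, real_inner_sub_sub_eq, norm_sub_rev y ystar] at hy
  have hbilin : ⟪K (xb - x'), y' - ystar⟫ + ⟪K (xstar - x'), yb' - y'⟫
      = ⟪K (xstar - x'), yb'⟫ - ⟪K xb, ystar - y'⟫ + ⟪K x', ystar⟫ - ⟪K xstar, y'⟫ := by
    simp only [map_sub, inner_sub_left, inner_sub_right]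
    ring
  have hτ_half : 1 / (2 * τ) = τ⁻¹ / 2 := by ring
  have hσ_half : 1 / (2 * σ) = σ⁻¹ / 2 := by ring
  rw [hbilin, hτ_half, hσ_half]
  linarith

lemma pdEnergy_succ_add_le [CompleteSpace E] [CompleteSpace F] (K : E →L[ℝ] F) (g : E → ℝ)
    (h : F → ℝ) {τ τ' σ σ' α β : ℝ} {x x' xb p xstar : E} {y y' yb' ystar : F}
    (hx : ⟪τ⁻¹ • (x - x') - K.adjoint yb', xstar - x'⟫ + g x' ≤ g xstar)
    (hy : ⟪σ⁻¹ • (y - y') + K xb, ystar - y'⟫ + h y' ≤ h ystar)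
    (hgap : ⟪K xstar, y'⟫ + g xstar - h y' ≤ ⟪K x', ystar⟫ + g x' - h ystar)
    (hxb : xb = x - α • p) (hyb : yb' = y' + β • (y' - y))
    (hτ : ‖K‖ * β ^ 2 = 1 / τ - 1 / τ') (hσ : ‖K‖ * (1 - α) ^ 2 = 1 / σ - 1 / σ') :
    pdEnergy K xstar ystar τ' σ' x' y' (x - x')
      + ((1 / (2 * τ) - ‖K‖) * ‖x - x'‖ ^ 2 + (1 / (2 * σ) - ‖K‖) * ‖y - y'‖ ^ 2)
      ≤ pdEnergy K xstar ystar τ σ x y p := by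
  have hstep := primal_dual_step_le K g h hx hy hgap
  have hsplit : ⟪K (xb - x'), y' - ystar⟫ = ⟪K (x - x'), y' - ystar⟫ - ⟪K p, y - ystar⟫
      - ⟪K p, y' - y⟫ + (1 - α) * ⟪K p, y' - ystar⟫ := by
    rw [hxb]
    simp only [map_sub, map_smul, inner_sub_left, inner_sub_right, real_inner_smul_left]
    ring
  rw [hsplit, hyb, add_sub_cancel_left, real_inner_smul_right] at hstep
  have hβ := mul_inner_apply_le_left K β (xstar - x') (y' - y)
  have hp := mul_inner_apply_le_left K (-1) p (y' - y)
  have hα := mul_inner_apply_le_right K (1 - α) p (y' - ystar)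
  rw [norm_sub_rev y' y] at hβ hp
  rw [norm_sub_rev y' ystar] at hα
  have hτ' : 1 / (2 * τ') = 1 / (2 * τ) - ‖K‖ * β ^ 2 / 2 := by
    linear_combination (1 / 2 : ℝ) * hτ
  have hσ' : 1 / (2 * σ') = 1 / (2 * σ) - ‖K‖ * (1 - α) ^ 2 / 2 := by
    linear_combination (1 / 2 : ℝ) * hσ
  simp only [pdEnergy, hτ', hσ']
  linarith

end

/-- `αs i` stands for the paper's `α_{i-1}`. -/
theorem stmt_16_general
    {H₁ : Type*} [NormedAddCommGroup H₁] [InnerProductSpace ℝ H₁] [CompleteSpace H₁]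
    {H₂ : Type*} [NormedAddCommGroup H₂] [InnerProductSpace ℝ H₂] [CompleteSpace H₂]
    (X : Set H₁) (Y : Set H₂)
    (K : H₁ →L[ℝ] H₂) (g : H₁ → ℝ) (h : H₂ → ℝ)
    (f : H₁ → H₂ → ℝ)
    (hf : ∀ x y, f x y = ⟪K x, y⟫ + g x - h y)
    (xs : ℕ → H₁) (ys : ℕ → H₂) (hxX : ∀ k, xs k ∈ X) (hyY : ∀ k, ys k ∈ Y)
    (τs σs : ℕ → ℝ) (hτ : ∀ k, 0 < τs k)
    (αs βs : ℕ → ℝ)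
    (xbs : ℕ → H₁) (ybs : ℕ → H₂)
    (hxb0 : xbs 0 = xs 0)
    (hxbS : ∀ k, xbs (k+1) = xs (k+1) + αs (k+1) • (xs (k+1) - xs k))
    (hybS : ∀ k, ybs (k+1) = ys (k+1) + βs k • (ys (k+1) - ys k))
    (hiterx : ∀ k, ∀ x ∈ X,
      ⟪(τs k)⁻¹ • (xs k - xs (k+1)) - (ContinuousLinearMap.adjoint K) (ybs (k+1)),
        x - xs (k+1)⟫ + g (xs (k+1)) ≤ g x)
    (hitery : ∀ k, ∀ y ∈ Y,
      ⟪(σs k)⁻¹ • (ys k - ys (k+1)) + K (xbs k), y - ys (k+1)⟫ + h (ys (k+1)) ≤ h y)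
    (hPCβ : ∀ i, ‖K‖ * (βs i)^2 = 1/(τs i) - 1/(τs (i+1)))
    (hPCα : ∀ i, ‖K‖ * (1 - αs i)^2 = 1/(σs i) - 1/(σs (i+1)))
    (xstar : H₁) (ystar : H₂) (hxstar : xstar ∈ X) (hystar : ystar ∈ Y)
    (hsaddle : ∀ x ∈ X, ∀ y ∈ Y, f xstar y ≤ f xstar ystar ∧ f xstar ystar ≤ f x ystar)
    (k : ℕ) :
    (1/(2*τs (k+1))) * ‖xstar - xs (k+1)‖^2
      + (1/(2*σs (k+1)) - ‖K‖^2 * τs k / 2) * ‖ystar - ys (k+1)‖^2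
      + ∑ i ∈ Finset.range k, (1/(2*τs i) - ‖K‖) * ‖xs i - xs (i+1)‖^2
      + ∑ i ∈ Finset.range (k+1), (1/(2*σs i) - ‖K‖) * ‖ys i - ys (i+1)‖^2
    ≤ (1/(2*τs 0)) * ‖xstar - xs 0‖^2 + (1/(2*σs 0)) * ‖ystar - ys 0‖^2 := by
  have hgap : ∀ x ∈ X, ∀ y ∈ Y,
      ⟪K xstar, y⟫ + g xstar - h y ≤ ⟪K x, ystar⟫ + g x - h ystar := fun x hx y hy => by
    simpa only [hf] using (hsaddle x hx y hy).1.trans (hsaddle x hx y hy).2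
  have hdescent := add_sum_range_le_of_succ_add_le
    (u := fun i => pdEnergy K xstar ystar (τs i) (σs i) (xs i) (ys i) (prevStep xs i))
    (d := fun i => (1 / (2 * τs i) - ‖K‖) * ‖xs i - xs (i + 1)‖ ^ 2
      + (1 / (2 * σs i) - ‖K‖) * ‖ys i - ys (i + 1)‖ ^ 2) (n := k + 1) fun i =>
      pdEnergy_succ_add_le K g h (hiterx i xstar hxstar) (hitery i ystar hystar)
        (hgap _ (hxX (i + 1)) _ (hyY (i + 1))) (eq_sub_smul_prevStep hxb0 hxbS i) (hybS i)
        (hPCβ i) (hPCα i)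
  have hcross := inner_apply_le_young K (hτ k) (xs k - xs (k + 1)) (ys (k + 1) - ystar)
  rw [norm_sub_rev (ys (k + 1))] at hcross
  simp only [pdEnergy, prevStep, Finset.sum_add_distrib, Finset.sum_range_succ _ k,
    norm_zero, map_zero, inner_zero_left] at hdescent ⊢
  linarith

/-- Theorem 4.14(i): Fejér-type estimate at a saddle-point under the parameter conditions (PC).  Here `αs i` models
the shifted family `α_{i-1}`, so the extrapolation update for `x̄^{k+1}` uses
`αs (k+1) = α_k`, and (PC) reads `‖K‖·(1 − αs i)² = 1/σ_i − 1/σ_{i+1}`. -/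
theorem stmt_16
    {H₁ : Type*} [NormedAddCommGroup H₁] [InnerProductSpace ℝ H₁] [CompleteSpace H₁]
    {H₂ : Type*} [NormedAddCommGroup H₂] [InnerProductSpace ℝ H₂] [CompleteSpace H₂]
    (X : Set H₁) (Y : Set H₂)
    (hXne : X.Nonempty) (hXcl : IsClosed X) (hXcv : Convex ℝ X)
    (hYne : Y.Nonempty) (hYcl : IsClosed Y) (hYcv : Convex ℝ Y)
    (K : H₁ →L[ℝ] H₂) (g : H₁ → ℝ) (h : H₂ → ℝ)
    (hg : ConvexOn ℝ Set.univ g) (hglsc : LowerSemicontinuous g)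
    (hh : ConvexOn ℝ Set.univ h) (hhlsc : LowerSemicontinuous h)
    (f : H₁ → H₂ → ℝ)
    (hf : ∀ x y, f x y = ⟪K x, y⟫ + g x - h y)
    (xs : ℕ → H₁) (ys : ℕ → H₂) (hxX : ∀ k, xs k ∈ X) (hyY : ∀ k, ys k ∈ Y)
    (τs σs : ℕ → ℝ) (hτ : ∀ k, 0 < τs k) (hσ : ∀ k, 0 < σs k)
    (αs βs : ℕ → ℝ) (hα : ∀ k, 0 ≤ αs k) (hβ : ∀ k, 0 ≤ βs k)
    (xbs : ℕ → H₁) (ybs : ℕ → H₂)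
    (hxb0 : xbs 0 = xs 0)
    (hxbS : ∀ k, xbs (k+1) = xs (k+1) + αs (k+1) • (xs (k+1) - xs k))
    (hyb0 : ybs 0 = ys 0)
    (hybS : ∀ k, ybs (k+1) = ys (k+1) + βs k • (ys (k+1) - ys k))
    (hiterx : ∀ k, ∀ x ∈ X,
      ⟪(τs k)⁻¹ • (xs k - xs (k+1)) - (ContinuousLinearMap.adjoint K) (ybs (k+1)),
        x - xs (k+1)⟫ + g (xs (k+1)) ≤ g x)
    (hitery : ∀ k, ∀ y ∈ Y,
      ⟪(σs k)⁻¹ • (ys k - ys (k+1)) + K (xbs k), y - ys (k+1)⟫ + h (ys (k+1)) ≤ h y)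
    (hPCβ : ∀ i, ‖K‖ * (βs i)^2 = 1/(τs i) - 1/(τs (i+1)))
    (hPCα : ∀ i, ‖K‖ * (1 - αs i)^2 = 1/(σs i) - 1/(σs (i+1)))
    (xstar : H₁) (ystar : H₂) (hxstar : xstar ∈ X) (hystar : ystar ∈ Y)
    (hsaddle : ∀ x ∈ X, ∀ y ∈ Y, f xstar y ≤ f xstar ystar ∧ f xstar ystar ≤ f x ystar)
    (k : ℕ) :
    (1/(2*τs (k+1))) * ‖xstar - xs (k+1)‖^2
      + (1/(2*σs (k+1)) - ‖K‖^2 * τs k / 2) * ‖ystar - ys (k+1)‖^2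
      + ∑ i ∈ Finset.range k, (1/(2*τs i) - ‖K‖) * ‖xs i - xs (i+1)‖^2
      + ∑ i ∈ Finset.range (k+1), (1/(2*σs i) - ‖K‖) * ‖ys i - ys (i+1)‖^2
    ≤ (1/(2*τs 0)) * ‖xstar - xs 0‖^2 + (1/(2*σs 0)) * ‖ystar - ys 0‖^2 :=
  stmt_16_general X Y K g h f hf xs ys hxX hyY τs σs hτ αs βs xbs ybs hxb0 hxbS hybS hiterx hitery
    hPCβ hPCα xstar ystar hxstar hystar hsaddle k
end

section
/- Suppose f has a saddle-point, assume the parameter conditions (PC), and assume limsup_{i→∞} τ_i < ∞, limsup_{i→∞} σ_i < ∞, ‖K‖·limsup_{i→∞} τ_i < 1/2 and ‖K‖·limsup_{i→∞} σ_i < 1/2. Then the sequence ((x̂_k, ŷ_k))_{k∈ℕ} has at least one weak sequential cluster point, and every weak sequential cluster point (x̄, ȳ) of ((x̂_k, ŷ_k)) — i.e., a pair such that for some strictly increasing φ : ℕ → ℕ one has ⟪x̂_{φ(i)}, u⟫ → ⟪x̄, u⟫ for all u ∈ H₁ and ⟪ŷ_{φ(i)}, v⟫ → ⟪ȳ, v⟫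 for all v ∈ H₂ — is a saddle-point of f. -/
open RealInnerProductSpace Filter Topology

section Helpers

variable {H : Type*} [NormedAddCommGroup H] [InnerProductSpace ℝ H]

lemma inner_diff_eq (a b c : H) :
    ⟪a - b, c - b⟫ = (‖c - b‖^2 + ‖b - a‖^2 - ‖c - a‖^2)/2 := by
  have h1 : ‖(c - b) + (b - a)‖^2 = ‖c - b‖^2 + 2*⟪c - b, b - a⟫ + ‖b - a‖^2 := by
    rw [← norm_add_sq_real]
  have h2 : (c - b) + (b - a) = c - a := by abel
  rw [h2] at h1
  have h3 : ⟪a - b, c - b⟫ = -⟪c - b, b - a⟫ := by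
    rw [real_inner_comm, show a - b = -(b - a) by abel, inner_neg_right]
  linarith

lemma crossK {H₂ : Type*} [NormedAddCommGroup H₂] [InnerProductSpace ℝ H₂]
    (K : H →L[ℝ] H₂) (u : H) (v : H₂) : ⟪K u, v⟫ ≤ ‖K‖ * (‖u‖^2 + ‖v‖^2)/2 := by
  have h1 : ⟪K u, v⟫ ≤ ‖K u‖ * ‖v‖ := real_inner_le_norm _ _
  have h2 : ‖K u‖ * ‖v‖ ≤ (‖K‖ * ‖u‖) * ‖v‖ :=
    mul_le_mul_of_nonneg_right (K.le_opNorm u) (norm_nonneg v)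
  have h3 : 0 ≤ ‖K‖ * (‖u‖ - ‖v‖)^2 := by positivity
  nlinarith

lemma absorb {c t d : ℝ} (ht : 0 < t) (hle : 2*c*t ≤ 1) (hd : 0 ≤ d) :
    c*d ≤ t⁻¹*d/2 := by
  have h1 : c ≤ 1/(2*t) := by rw [le_div_iff₀ (by positivity)]; linarith
  have h2 : (1:ℝ)/(2*t) = t⁻¹/2 := by field_simp
  rw [h2] at h1
  calc c*d ≤ (t⁻¹/2)*d := mul_le_mul_of_nonneg_right h1 hd
    _ = t⁻¹*d/2 := by ring

end Helpers

lemma mem_of_weak_freq {H : Type*} [NormedAddCommGroup H] [InnerProductSpace ℝ H] [CompleteSpace H]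
    {S : Set H} (hcv : Convex ℝ S) (hcl : IsClosed S) {z : ℕ → H} {a : H}
    (hfreq : ∃ᶠ n in Filter.atTop, z n ∈ S)
    (hw : ∀ v : H, Filter.Tendsto (fun n => ⟪z n, v⟫) Filter.atTop (nhds ⟪a, v⟫)) : a ∈ S := by
  by_contra ha
  obtain ⟨l, c, hS, hc⟩ := geometric_hahn_banach_closed_point hcv hcl ha
  set w := (InnerProductSpace.toDual ℝ H).symm l with hwdef
  have hlw : ∀ v, ⟪w, v⟫ = l v := fun v => InnerProductSpace.toDual_symm_apply
  have hconv : Filter.Tendsto (fun n => ⟪z n, w⟫) Filter.atTop (nhds ⟪a, w⟫) := hw w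
  have hgt : c < ⟪a, w⟫ := by rw [real_inner_comm, hlw]; exact hc
  have hev : ∀ᶠ n in Filter.atTop, c < ⟪z n, w⟫ :=
    hconv.eventually (eventually_gt_nhds hgt)
  obtain ⟨n, hn1, hn2⟩ := (hfreq.and_eventually hev).exists
  have := hS (z n) hn1
  rw [← hlw, real_inner_comm] at this
  linarith

lemma exists_weak_subseq {H : Type*} [NormedAddCommGroup H] [InnerProductSpace ℝ H]
    [CompleteSpace H] (u : ℕ → H) (C : ℝ) (hb : ∀ n, ‖u n‖ ≤ C) :
    ∃ (a : H) (φ : ℕ → ℕ), StrictMono φ ∧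
      ∀ v : H, Filter.Tendsto (fun i => ⟪u (φ i), v⟫) Filter.atTop (nhds ⟪a, v⟫) := by
  classical
  set M : ℝ := C + 1 with hM
  have hM0 : 0 < M := by have := (norm_nonneg (u 0)).trans (hb 0); linarith
  have hbM : ∀ n, ‖u n‖ ≤ M := fun n => (hb n).trans (by linarith)
  set V : Submodule ℝ H := (Submodule.span ℝ (Set.range u)).topologicalClosure with hV
  haveI : CompleteSpace V := (Submodule.isClosed_topologicalClosure _).completeSpace_coe
  have huV : ∀ n, u n ∈ V :=
    fun n => Submodule.le_topologicalClosure _ (Submodule.subset_span ⟨n, rfl⟩)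
  have hsep : TopologicalSpace.IsSeparable (Submodule.span ℝ (Set.range u) : Set H) :=
    ((Set.countable_range u).isSeparable).span
  obtain ⟨c, hccount, hcsub⟩ := hsep
  have hcne : (insert (0:H) c).Nonempty := ⟨0, Set.mem_insert _ _⟩
  obtain ⟨d, hd⟩ := (hccount.insert 0).exists_eq_range hcne
  have hVsub : (V : Set H) ⊆ closure (Set.range d) := by
    rw [← hd]
    calc (V : Set H) = closure (Submodule.span ℝ (Set.range u) : Set H) :=
          Submodule.topologicalClosure_coe _
      _ ⊆ closure (closure c) := closure_mono hcsub
      _ = closure c := closure_closure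
      _ ⊆ closure (insert 0 c) := closure_mono (Set.subset_insert _ _)
  -- compactness in the product space
  set T : Set (ℕ → ℝ) := Set.univ.pi (fun j => Set.Icc (-(M*‖d j‖)) (M*‖d j‖)) with hT
  have hTc : IsCompact T := isCompact_univ_pi (fun j => isCompact_Icc)
  have hmem : ∀ n, (fun j => ⟪u n, d j⟫) ∈ T := by
    intro n
    intro j _
    have h1 : |⟪u n, d j⟫| ≤ ‖u n‖ * ‖d j‖ := abs_real_inner_le_norm _ _
    have h2 : ‖u n‖ * ‖d j‖ ≤ M * ‖d j‖ :=
      mul_le_mul_of_nonneg_right (hbM n) (norm_nonneg _)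
    constructor
    · nlinarith [abs_nonneg ⟪u n, d j⟫, neg_abs_le ⟪u n, d j⟫]
    · exact (le_abs_self _).trans (h1.trans h2)
  obtain ⟨ℓ, -, φ, hφ, hconv⟩ := hTc.isSeqCompact hmem
  rw [tendsto_pi_nhds] at hconv
  have hdj : ∀ j, Filter.Tendsto (fun i => ⟪u (φ i), d j⟫) Filter.atTop (nhds (ℓ j)) :=
    fun j => hconv j
  -- Cauchy for every v
  have hCauchy : ∀ v : H, CauchySeq (fun i => ⟪u (φ i), v⟫) := by
    intro v
    set w : H := (V.orthogonalProjectionOnto v : H) with hw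
    have hproj : ∀ n, ⟪u n, v⟫ = ⟪u n, w⟫ := by
      intro n
      have horth : v - w ∈ Vᗮ := Submodule.sub_starProjection_mem_orthogonal (K := V) v
      have : ⟪u n, v - w⟫ = 0 := (Submodule.mem_orthogonal V _).1 horth (u n) (huV n)
      rw [inner_sub_right] at this
      linarith
    have hwcl : w ∈ closure (Set.range d) := hVsub (V.orthogonalProjectionOnto v).2
    rw [Metric.cauchySeq_iff]
    intro ε hε
    obtain ⟨p, hp, hpd⟩ := Metric.mem_closure_iff.1 hwcl (ε/(8*M)) (by positivity)
    obtain ⟨j, hj⟩ := hp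
    have hcau := (hdj j).cauchySeq
    rw [Metric.cauchySeq_iff] at hcau
    obtain ⟨N, hN⟩ := hcau (ε/2) (by positivity)
    refine ⟨N, fun m hm n hn => ?_⟩
    have hdist : dist ⟪u (φ m), d j⟫ ⟪u (φ n), d j⟫ < ε/2 := hN m hm n hn
    have key : ∀ q, |⟪u (φ q), w⟫ - ⟪u (φ q), d j⟫| ≤ 2*M*(ε/(8*M)) := by
      intro q
      have : ⟪u (φ q), w⟫ - ⟪u (φ q), d j⟫ = ⟪u (φ q), w - d j⟫ := by
        rw [inner_sub_right]
      rw [this]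
      have h1 : |⟪u (φ q), w - d j⟫| ≤ ‖u (φ q)‖ * ‖w - d j‖ := abs_real_inner_le_norm _ _
      have h2 : ‖w - d j‖ < ε/(8*M) := by rw [hj, ← dist_eq_norm]; exact hpd
      have h3 : ‖u (φ q)‖ * ‖w - d j‖ ≤ M * (ε/(8*M)) := by
        apply mul_le_mul (hbM _) h2.le (norm_nonneg _) hM0.le
      nlinarith [norm_nonneg (u (φ q)), norm_nonneg (w - d j)]
    have hεM : 2*M*(ε/(8*M)) = ε/4 := by field_simp; ring
    rw [Real.dist_eq] at hdist ⊢
    rw [hproj (φ m), hproj (φ n)]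
    have k1 := key m
    have k2 := key n
    rw [hεM] at k1 k2
    rw [abs_sub_lt_iff] at hdist ⊢
    rw [abs_sub_le_iff] at k1 k2
    constructor <;> linarith
  have hlim : ∀ v : H, ∃ r : ℝ, Filter.Tendsto (fun i => ⟪u (φ i), v⟫) Filter.atTop (nhds r) :=
    fun v => cauchySeq_tendsto_of_complete (hCauchy v)
  choose L hL using hlim
  have hLbound : ∀ v, |L v| ≤ M * ‖v‖ := by
    intro v
    have h1 : Filter.Tendsto (fun i => |⟪u (φ i), v⟫|) Filter.atTop (nhds (|L v|)) :=
      (hL v).abs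
    apply le_of_tendsto h1
    filter_upwards with i
    exact (abs_real_inner_le_norm _ _).trans
      (mul_le_mul_of_nonneg_right (hbM _) (norm_nonneg _))
  have hLadd : ∀ v₁ v₂, L (v₁ + v₂) = L v₁ + L v₂ := by
    intro v₁ v₂
    have h1 : Filter.Tendsto (fun i => ⟪u (φ i), v₁⟫ + ⟪u (φ i), v₂⟫) Filter.atTop
        (nhds (L v₁ + L v₂)) := (hL v₁).add (hL v₂)
    have h2 := hL (v₁ + v₂)
    simp only [inner_add_right] at h2
    exact tendsto_nhds_unique h2 h1
  have hLsmul : ∀ (r : ℝ) v, L (r • v) = r * L v := by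
    intro r v
    have h1 : Filter.Tendsto (fun i => r * ⟪u (φ i), v⟫) Filter.atTop (nhds (r * L v)) :=
      (hL v).const_mul r
    have h2 := hL (r • v)
    simp only [real_inner_smul_right] at h2
    exact tendsto_nhds_unique h2 h1
  let Lmap : H →ₗ[ℝ] ℝ :=
    { toFun := L, map_add' := hLadd, map_smul' := hLsmul }
  let Lc : H →L[ℝ] ℝ := LinearMap.mkContinuous Lmap M
    (fun v => by
      have : ‖Lmap v‖ = |L v| := rfl
      rw [this]; exact hLbound v)
  refine ⟨(InnerProductSpace.toDual ℝ H).symm Lc, φ, hφ, fun v => ?_⟩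
  have : ⟪(InnerProductSpace.toDual ℝ H).symm Lc, v⟫ = Lc v := InnerProductSpace.toDual_symm_apply
  rw [this]
  exact hL v

set_option maxHeartbeats 2000000 in
/-- Theorem 4.15(i): existence of weak sequential cluster points of the averaged iterates,
and every such cluster point is a saddle-point of `f`.  Here `αs i` models
the shifted family `α_{i-1}`, so the extrapolation update for `x̄^{k+1}` uses
`αs (k+1) = α_k`, and (PC) reads `‖K‖·(1 − αs i)² = 1/σ_i − 1/σ_{i+1}`. -/
theorem stmt_18
    {H₁ : Type*} [NormedAddCommGroup H₁] [InnerProductSpace ℝ H₁] [CompleteSpace H₁]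
    {H₂ : Type*} [NormedAddCommGroup H₂] [InnerProductSpace ℝ H₂] [CompleteSpace H₂]
    (X : Set H₁) (Y : Set H₂)
    (hXne : X.Nonempty) (hXcl : IsClosed X) (hXcv : Convex ℝ X)
    (hYne : Y.Nonempty) (hYcl : IsClosed Y) (hYcv : Convex ℝ Y)
    (K : H₁ →L[ℝ] H₂) (g : H₁ → ℝ) (h : H₂ → ℝ)
    (hg : ConvexOn ℝ Set.univ g) (hglsc : LowerSemicontinuous g)
    (hh : ConvexOn ℝ Set.univ h) (hhlsc : LowerSemicontinuous h)
    (f : H₁ → H₂ → ℝ)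
    (hf : ∀ x y, f x y = ⟪K x, y⟫ + g x - h y)
    (xs : ℕ → H₁) (ys : ℕ → H₂) (hxX : ∀ k, xs k ∈ X) (hyY : ∀ k, ys k ∈ Y)
    (τs σs : ℕ → ℝ) (hτ : ∀ k, 0 < τs k) (hσ : ∀ k, 0 < σs k)
    (αs βs : ℕ → ℝ) (hα : ∀ k, 0 ≤ αs k) (hβ : ∀ k, 0 ≤ βs k)
    (xbs : ℕ → H₁) (ybs : ℕ → H₂)
    (hxb0 : xbs 0 = xs 0)
    (hxbS : ∀ k, xbs (k+1) = xs (k+1) + αs (k+1) • (xs (k+1) - xs k))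
    (hyb0 : ybs 0 = ys 0)
    (hybS : ∀ k, ybs (k+1) = ys (k+1) + βs k • (ys (k+1) - ys k))
    (hiterx : ∀ k, ∀ x ∈ X,
      ⟪(τs k)⁻¹ • (xs k - xs (k+1)) - (ContinuousLinearMap.adjoint K) (ybs (k+1)),
        x - xs (k+1)⟫ + g (xs (k+1)) ≤ g x)
    (hitery : ∀ k, ∀ y ∈ Y,
      ⟪(σs k)⁻¹ • (ys k - ys (k+1)) + K (xbs k), y - ys (k+1)⟫ + h (ys (k+1)) ≤ h y)
    (hPCβ : ∀ i, ‖K‖ * (βs i)^2 = 1/(τs i) - 1/(τs (i+1)))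
    (hPCα : ∀ i, ‖K‖ * (1 - αs i)^2 = 1/(σs i) - 1/(σs (i+1)))
    (hexists : ∃ (xstar : H₁) (ystar : H₂), xstar ∈ X ∧ ystar ∈ Y ∧
      ∀ x ∈ X, ∀ y ∈ Y, f xstar y ≤ f xstar ystar ∧ f xstar ystar ≤ f x ystar)
    (hτbdd : BddAbove (Set.range τs)) (hσbdd : BddAbove (Set.range σs))
    (hKτ : ‖K‖ * Filter.limsup τs Filter.atTop < 1/2)
    (hKσ : ‖K‖ * Filter.limsup σs Filter.atTop < 1/2)
    (xhat : ℕ → H₁) (yhat : ℕ → H₂)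
    (hxhat : ∀ k, xhat k = (((k : ℝ)+1)⁻¹) • ∑ i ∈ Finset.range (k+1), xs (i+1))
    (hyhat : ∀ k, yhat k = (((k : ℝ)+1)⁻¹) • ∑ i ∈ Finset.range (k+1), ys (i+1)) :
    (∃ (a : H₁) (b : H₂) (φ : ℕ → ℕ), StrictMono φ ∧
      (∀ u : H₁, Filter.Tendsto (fun i => ⟪xhat (φ i), u⟫) Filter.atTop (nhds ⟪a, u⟫)) ∧
      (∀ v : H₂, Filter.Tendsto (fun i => ⟪yhat (φ i), v⟫) Filter.atTop (nhds ⟪b, v⟫))) ∧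
    (∀ (a : H₁) (b : H₂),
      (∃ φ : ℕ → ℕ, StrictMono φ ∧
        (∀ u : H₁, Filter.Tendsto (fun i => ⟪xhat (φ i), u⟫) Filter.atTop (nhds ⟪a, u⟫)) ∧
        (∀ v : H₂, Filter.Tendsto (fun i => ⟪yhat (φ i), v⟫) Filter.atTop (nhds ⟪b, v⟫))) →
      a ∈ X ∧ b ∈ Y ∧ ∀ x ∈ X, ∀ y ∈ Y, f a y ≤ f a b ∧ f a b ≤ f x b) := by
  have hK0 : (0:ℝ) ≤ ‖K‖ := norm_nonneg _
  have hτmono : Monotone τs := by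
    apply monotone_nat_of_le_succ
    intro i
    have h1 : (0:ℝ) ≤ ‖K‖ * (βs i)^2 := by positivity
    rw [hPCβ i, sub_nonneg] at h1
    exact le_of_one_div_le_one_div (hτ (i+1)) h1
  have hσmono : Monotone σs := by
    apply monotone_nat_of_le_succ
    intro i
    have h1 : (0:ℝ) ≤ ‖K‖ * (1 - αs i)^2 := by positivity
    rw [hPCα i, sub_nonneg] at h1
    exact le_of_one_div_le_one_div (hσ (i+1)) h1
  have hτle : ∀ i, τs i ≤ Filter.limsup τs Filter.atTop := by
    intro i
    apply Filter.le_limsup_of_frequently_le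
    · apply Filter.Eventually.frequently
      filter_upwards [Filter.eventually_ge_atTop i] with j hj
      exact hτmono hj
    · exact hτbdd.isBoundedUnder_of_range
  have hσle : ∀ i, σs i ≤ Filter.limsup σs Filter.atTop := by
    intro i
    apply Filter.le_limsup_of_frequently_le
    · apply Filter.Eventually.frequently
      filter_upwards [Filter.eventually_ge_atTop i] with j hj
      exact hσmono hj
    · exact hσbdd.isBoundedUnder_of_range
  have hKτi : ∀ i, 2 * ‖K‖ * τs i ≤ 1 := by
    intro i
    have := mul_le_mul_of_nonneg_left (hτle i) hK0
    linarith [hKτ]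
  have hKσi : ∀ i, 2 * ‖K‖ * σs i ≤ 1 := by
    intro i
    have := mul_le_mul_of_nonneg_left (hσle i) hK0
    linarith [hKσ]
  have hPCβ' : ∀ i, ‖K‖ * (βs i)^2 = (τs i)⁻¹ - (τs (i+1))⁻¹ := by
    intro i; rw [hPCβ i, one_div, one_div]
  have hPCα' : ∀ i, ‖K‖ * (1 - αs i)^2 = (σs i)⁻¹ - (σs (i+1))⁻¹ := by
    intro i; rw [hPCα i, one_div, one_div]
  set Δp : ℕ → H₁ := fun i => xs i - xs (i - 1) with hΔp
  have hΔp0 : Δp 0 = 0 := by simp [hΔp]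
  have hΔpS : ∀ i, Δp (i+1) = xs (i+1) - xs i := fun i => by simp [hΔp]
  have hxbar : ∀ i, xbs i = xs i + αs i • Δp i := by
    intro i
    cases i with
    | zero => rw [hxb0, hΔp0, smul_zero, add_zero]
    | succ j => rw [hxbS j, hΔpS j]
  set Φ : H₁ → H₂ → ℕ → ℝ := fun x y i =>
    (‖x - xs i‖^2 * (τs i)⁻¹ + ‖y - ys i‖^2 * (σs i)⁻¹)/2 + ‖K‖ * ‖Δp i‖^2
      - ⟪K (Δp i), y - ys i⟫ with hΦ
  set GAP : H₁ → H₂ → ℕ → ℝ := fun x y i =>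
    ⟪K (xs (i+1)), y⟫ + g (xs (i+1)) - h y - ⟪K x, ys (i+1)⟫ - g x + h (ys (i+1)) with hGAP
  have hstep : ∀ x ∈ X, ∀ y ∈ Y, ∀ i, GAP x y i + Φ x y (i+1) ≤ Φ x y i := by
    intro x hx y hy i
    have I1 := hiterx i x hx
    have I2 := hitery i y hy
    set A : ℝ := ⟪xs i - xs (i+1), x - xs (i+1)⟫ with hA
    set B : ℝ := ⟪ys i - ys (i+1), y - ys (i+1)⟫ with hB
    have I1' : g (xs (i+1)) - g x ≤ -((τs i)⁻¹ * A) + ⟪ys (i+1), K (x - xs (i+1))⟫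
        + βs i * ⟪ys (i+1) - ys i, K (x - xs (i+1))⟫ := by
      have e1 : ⟪(τs i)⁻¹ • (xs i - xs (i+1)) - (ContinuousLinearMap.adjoint K) (ybs (i+1)),
          x - xs (i+1)⟫ = (τs i)⁻¹ * A - (⟪ys (i+1), K (x - xs (i+1))⟫
          + βs i * ⟪ys (i+1) - ys i, K (x - xs (i+1))⟫) := by
        rw [hybS i, hA]
        simp only [inner_sub_left, inner_add_left, real_inner_smul_left,
          ContinuousLinearMap.adjoint_inner_left]
      rw [e1] at I1
      linarith
    have I2' : h (ys (i+1)) - h y ≤ -((σs i)⁻¹ * B) - ⟪K (xs i), y - ys (i+1)⟫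
        - αs i * ⟪K (Δp i), y - ys (i+1)⟫ := by
      have e2 : ⟪(σs i)⁻¹ • (ys i - ys (i+1)) + K (xbs i), y - ys (i+1)⟫
          = (σs i)⁻¹ * B + ⟪K (xs i), y - ys (i+1)⟫ + αs i * ⟪K (Δp i), y - ys (i+1)⟫ := by
        rw [hxbar i, hB]
        simp only [map_add, map_smul, inner_add_left, real_inner_smul_left]
        ring
      rw [e2] at I2
      linarith
    have hW : ⟪K (xs (i+1)), y⟫ - ⟪K x, ys (i+1)⟫ + ⟪ys (i+1), K (x - xs (i+1))⟫
        - ⟪K (xs i), y - ys (i+1)⟫ = ⟪K (Δp (i+1)), y - ys (i+1)⟫ := by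
      rw [hΔpS i]
      simp only [map_sub, inner_sub_left, inner_sub_right]
      rw [real_inner_comm (ys (i+1)) (K x), real_inner_comm (ys (i+1)) (K (xs (i+1)))]
      ring
    have hαid : -(αs i * ⟪K (Δp i), y - ys (i+1)⟫) = -⟪K (Δp i), y - ys i⟫
        + (1 - αs i) * ⟪K (Δp i), y - ys (i+1)⟫ + ⟪K (Δp i), ys (i+1) - ys i⟫ := by
      simp only [inner_sub_right]
      ring
    have ha : (1 - αs i) * ⟪K (Δp i), y - ys (i+1)⟫
        ≤ (‖K‖ * ‖Δp i‖^2 + ((σs i)⁻¹ - (σs (i+1))⁻¹) * ‖y - ys (i+1)‖^2)/2 := by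
      have e3 : (1 - αs i) * ⟪K (Δp i), y - ys (i+1)⟫
          = ⟪K (Δp i), (1 - αs i) • (y - ys (i+1))⟫ := by
        rw [real_inner_smul_right]
      have e4 : ‖(1 - αs i) • (y - ys (i+1))‖^2 = (1 - αs i)^2 * ‖y - ys (i+1)‖^2 := by
        rw [norm_smul, Real.norm_eq_abs, mul_pow, sq_abs]
      have := crossK K (Δp i) ((1 - αs i) • (y - ys (i+1)))
      rw [e4] at this
      rw [e3]
      calc ⟪K (Δp i), (1 - αs i) • (y - ys (i+1))⟫
          ≤ ‖K‖ * (‖Δp i‖^2 + (1 - αs i)^2 * ‖y - ys (i+1)‖^2)/2 := this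
        _ = (‖K‖ * ‖Δp i‖^2 + (‖K‖ * (1 - αs i)^2) * ‖y - ys (i+1)‖^2)/2 := by ring
        _ = (‖K‖ * ‖Δp i‖^2 + ((σs i)⁻¹ - (σs (i+1))⁻¹) * ‖y - ys (i+1)‖^2)/2 := by
            rw [hPCα' i]
    have hb' : ⟪K (Δp i), ys (i+1) - ys i⟫
        ≤ ‖K‖ * (‖Δp i‖^2 + ‖ys (i+1) - ys i‖^2)/2 := crossK K _ _
    have hc : βs i * ⟪ys (i+1) - ys i, K (x - xs (i+1))⟫
        ≤ (((τs i)⁻¹ - (τs (i+1))⁻¹) * ‖x - xs (i+1)‖^2 + ‖K‖ * ‖ys (i+1) - ys i‖^2)/2 := by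
      have e5 : βs i * ⟪ys (i+1) - ys i, K (x - xs (i+1))⟫
          = ⟪K (βs i • (x - xs (i+1))), ys (i+1) - ys i⟫ := by
        rw [map_smul, real_inner_smul_left, real_inner_comm]
      have e6 : ‖βs i • (x - xs (i+1))‖^2 = (βs i)^2 * ‖x - xs (i+1)‖^2 := by
        rw [norm_smul, Real.norm_eq_abs, mul_pow, sq_abs]
      have := crossK K (βs i • (x - xs (i+1))) (ys (i+1) - ys i)
      rw [e6] at this
      rw [e5]
      calc ⟪K (βs i • (x - xs (i+1))), ys (i+1) - ys i⟫
          ≤ ‖K‖ * ((βs i)^2 * ‖x - xs (i+1)‖^2 + ‖ys (i+1) - ys i‖^2)/2 := this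
        _ = ((‖K‖ * (βs i)^2) * ‖x - xs (i+1)‖^2 + ‖K‖ * ‖ys (i+1) - ys i‖^2)/2 := by ring
        _ = (((τs i)⁻¹ - (τs (i+1))⁻¹) * ‖x - xs (i+1)‖^2 + ‖K‖ * ‖ys (i+1) - ys i‖^2)/2 := by
            rw [hPCβ' i]
    have hpolA : (τs i)⁻¹ * A = ((τs i)⁻¹ * ‖x - xs (i+1)‖^2 + (τs i)⁻¹ * ‖Δp (i+1)‖^2
        - (τs i)⁻¹ * ‖x - xs i‖^2)/2 := by
      rw [hA, inner_diff_eq, hΔpS i]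
      ring
    have hpolB : (σs i)⁻¹ * B = ((σs i)⁻¹ * ‖y - ys (i+1)‖^2 + (σs i)⁻¹ * ‖ys (i+1) - ys i‖^2
        - (σs i)⁻¹ * ‖y - ys i‖^2)/2 := by
      rw [hB, inner_diff_eq]
      ring
    have habs1 : ‖K‖ * ‖ys (i+1) - ys i‖^2 ≤ (σs i)⁻¹ * ‖ys (i+1) - ys i‖^2/2 :=
      absorb (hσ i) (hKσi i) (by positivity)
    have habs2 : ‖K‖ * ‖Δp (i+1)‖^2 ≤ (τs i)⁻¹ * ‖Δp (i+1)‖^2/2 :=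
      absorb (hτ i) (hKτi i) (by positivity)
    simp only [hΦ, hGAP]
    linarith [I1', I2', hW, hαid, ha, hb', hc, hpolA, hpolB, habs1, habs2]
  -- telescoping
  have hsum : ∀ x ∈ X, ∀ y ∈ Y, ∀ n, (∑ i ∈ Finset.range n, GAP x y i) + Φ x y n ≤ Φ x y 0 := by
    intro x hx y hy n
    induction n with
    | zero => simp
    | succ m ih =>
      rw [Finset.sum_range_succ]
      have := hstep x hx y hy m
      linarith
  have hΦ0 : ∀ x y, Φ x y 0 = (‖x - xs 0‖^2 * (τs 0)⁻¹ + ‖y - ys 0‖^2 * (σs 0)⁻¹)/2 := by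
    intro x y
    simp only [hΦ, hΔp0]
    simp
  have hΦlow : ∀ x y n, ‖x - xs n‖^2 * (τs n)⁻¹/2 + ‖y - ys n‖^2 * (σs n)⁻¹/4 ≤ Φ x y n := by
    intro x y n
    have ht : ⟪K (Δp n), y - ys n⟫ ≤ ‖K‖ * (‖Δp n‖^2 + ‖y - ys n‖^2)/2 := crossK K _ _
    have habs : ‖K‖ * ‖y - ys n‖^2 ≤ (σs n)⁻¹ * ‖y - ys n‖^2/2 :=
      absorb (hσ n) (hKσi n) (by positivity)
    have hE : 0 ≤ ‖K‖ * ‖Δp n‖^2 := by positivity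
    simp only [hΦ]
    linarith
  have hmaster : ∀ x ∈ X, ∀ y ∈ Y, ∀ n, (∑ i ∈ Finset.range n, GAP x y i)
      + ‖x - xs n‖^2 * (τs n)⁻¹/2 + ‖y - ys n‖^2 * (σs n)⁻¹/4
      ≤ (‖x - xs 0‖^2 * (τs 0)⁻¹ + ‖y - ys 0‖^2 * (σs 0)⁻¹)/2 := by
    intro x hx y hy n
    have h1 := hsum x hx y hy n
    rw [hΦ0 x y] at h1
    linarith [hΦlow x y n]
  have hGAPf : ∀ x y i, GAP x y i = f (xs (i+1)) y - f x (ys (i+1)) := by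
    intro x y i
    simp only [hGAP]
    rw [hf, hf]
    ring
  obtain ⟨xst, yst, hxst, hyst, hsaddle⟩ := hexists
  have hGAPpos : ∀ i, 0 ≤ GAP xst yst i := by
    intro i
    rw [hGAPf]
    obtain ⟨h1, h2⟩ := hsaddle (xs (i+1)) (hxX (i+1)) (ys (i+1)) (hyY (i+1))
    linarith
  set C0 : ℝ := (‖xst - xs 0‖^2 * (τs 0)⁻¹ + ‖yst - ys 0‖^2 * (σs 0)⁻¹)/2 with hC0
  have hC0n : 0 ≤ C0 := by
    have := hτ 0
    have := hσ 0
    positivity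
  set T : ℝ := Filter.limsup τs Filter.atTop with hT
  set S : ℝ := Filter.limsup σs Filter.atTop with hS
  have hT0 : 0 < T := lt_of_lt_of_le (hτ 0) (hτle 0)
  have hS0 : 0 < S := lt_of_lt_of_le (hσ 0) (hσle 0)
  have hxbound : ∀ n, ‖xst - xs n‖^2 ≤ 2*C0*T := by
    intro n
    have h1 := hmaster xst hxst yst hyst n
    have h2 : (0:ℝ) ≤ ∑ i ∈ Finset.range n, GAP xst yst i :=
      Finset.sum_nonneg (fun i _ => hGAPpos i)
    have h3 : (0:ℝ) ≤ ‖yst - ys n‖^2 * (σs n)⁻¹/4 := by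
      have := hσ n
      positivity
    have h4 : ‖xst - xs n‖^2 * (τs n)⁻¹ ≤ 2*C0 := by linarith
    have h5 : ‖xst - xs n‖^2 ≤ 2*C0*τs n := by
      have hτn := hτ n
      calc ‖xst - xs n‖^2 = (‖xst - xs n‖^2 * (τs n)⁻¹) * τs n := by field_simp
        _ ≤ (2*C0) * τs n := mul_le_mul_of_nonneg_right h4 hτn.le
        _ = 2*C0*τs n := by ring
    exact h5.trans (mul_le_mul_of_nonneg_left (hτle n) (by positivity))
  have hybound : ∀ n, ‖yst - ys n‖^2 ≤ 4*C0*S := by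
    intro n
    have h1 := hmaster xst hxst yst hyst n
    have h2 : (0:ℝ) ≤ ∑ i ∈ Finset.range n, GAP xst yst i :=
      Finset.sum_nonneg (fun i _ => hGAPpos i)
    have h3 : (0:ℝ) ≤ ‖xst - xs n‖^2 * (τs n)⁻¹/2 := by
      have := hτ n
      positivity
    have h4 : ‖yst - ys n‖^2 * (σs n)⁻¹ ≤ 4*C0 := by linarith
    have h5 : ‖yst - ys n‖^2 ≤ 4*C0*σs n := by
      have hσn := hσ n
      calc ‖yst - ys n‖^2 = (‖yst - ys n‖^2 * (σs n)⁻¹) * σs n := by field_simp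
        _ ≤ (4*C0) * σs n := mul_le_mul_of_nonneg_right h4 hσn.le
        _ = 4*C0*σs n := by ring
    exact h5.trans (mul_le_mul_of_nonneg_left (hσle n) (by positivity))
  set Rx : ℝ := ‖xst‖ + Real.sqrt (2*C0*T) with hRx
  set Ry : ℝ := ‖yst‖ + Real.sqrt (4*C0*S) with hRy
  have hxsb : ∀ n, ‖xs n‖ ≤ Rx := by
    intro n
    have h0 : (0:ℝ) ≤ 2*C0*T := by positivity
    have h1 : ‖xst - xs n‖ ≤ Real.sqrt (2*C0*T) :=
      (Real.le_sqrt (norm_nonneg _) h0).2 (hxbound n)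
    calc ‖xs n‖ = ‖xst - (xst - xs n)‖ := by rw [sub_sub_cancel]
      _ ≤ ‖xst‖ + ‖xst - xs n‖ := norm_sub_le _ _
      _ ≤ Rx := by rw [hRx]; linarith
  have hysb : ∀ n, ‖ys n‖ ≤ Ry := by
    intro n
    have h0 : (0:ℝ) ≤ 4*C0*S := by positivity
    have h1 : ‖yst - ys n‖ ≤ Real.sqrt (4*C0*S) :=
      (Real.le_sqrt (norm_nonneg _) h0).2 (hybound n)
    calc ‖ys n‖ = ‖yst - (yst - ys n)‖ := by rw [sub_sub_cancel]
      _ ≤ ‖yst‖ + ‖yst - ys n‖ := norm_sub_le _ _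
      _ ≤ Ry := by rw [hRy]; linarith
  have hxhatb : ∀ k, ‖xhat k‖ ≤ Rx := by
    intro k
    rw [hxhat k]
    have hk : (0:ℝ) < (k:ℝ)+1 := by positivity
    rw [norm_smul, Real.norm_eq_abs, abs_of_pos (inv_pos.2 hk)]
    have h1 : ‖∑ i ∈ Finset.range (k+1), xs (i+1)‖ ≤ ∑ i ∈ Finset.range (k+1), ‖xs (i+1)‖ :=
      norm_sum_le _ _
    have h2 : ∑ i ∈ Finset.range (k+1), ‖xs (i+1)‖ ≤ ((k:ℝ)+1) * Rx := by
      calc ∑ i ∈ Finset.range (k+1), ‖xs (i+1)‖ ≤ ∑ _i ∈ Finset.range (k+1), Rx :=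
            Finset.sum_le_sum (fun i _ => hxsb (i+1))
        _ = ((k:ℝ)+1) * Rx := by
            rw [Finset.sum_const, Finset.card_range, nsmul_eq_mul]
            push_cast
            ring
    calc ((k:ℝ)+1)⁻¹ * ‖∑ i ∈ Finset.range (k+1), xs (i+1)‖
        ≤ ((k:ℝ)+1)⁻¹ * (((k:ℝ)+1) * Rx) :=
          mul_le_mul_of_nonneg_left (h1.trans h2) (by positivity)
      _ = Rx := by field_simp
  have hyhatb : ∀ k, ‖yhat k‖ ≤ Ry := by
    intro k
    rw [hyhat k]
    have hk : (0:ℝ) < (k:ℝ)+1 := by positivity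
    rw [norm_smul, Real.norm_eq_abs, abs_of_pos (inv_pos.2 hk)]
    have h1 : ‖∑ i ∈ Finset.range (k+1), ys (i+1)‖ ≤ ∑ i ∈ Finset.range (k+1), ‖ys (i+1)‖ :=
      norm_sum_le _ _
    have h2 : ∑ i ∈ Finset.range (k+1), ‖ys (i+1)‖ ≤ ((k:ℝ)+1) * Ry := by
      calc ∑ i ∈ Finset.range (k+1), ‖ys (i+1)‖ ≤ ∑ _i ∈ Finset.range (k+1), Ry :=
            Finset.sum_le_sum (fun i _ => hysb (i+1))
        _ = ((k:ℝ)+1) * Ry := by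
            rw [Finset.sum_const, Finset.card_range, nsmul_eq_mul]
            push_cast
            ring
    calc ((k:ℝ)+1)⁻¹ * ‖∑ i ∈ Finset.range (k+1), ys (i+1)‖
        ≤ ((k:ℝ)+1)⁻¹ * (((k:ℝ)+1) * Ry) :=
          mul_le_mul_of_nonneg_left (h1.trans h2) (by positivity)
      _ = Ry := by field_simp
  -- averages stay in X, Y
  have hw0 : ∀ k : ℕ, ∀ i ∈ Finset.range (k+1), (0:ℝ) ≤ ((k:ℝ)+1)⁻¹ := by
    intro k i _
    positivity
  have hw1 : ∀ k : ℕ, ∑ _i ∈ Finset.range (k+1), ((k:ℝ)+1)⁻¹ = 1 := by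
    intro k
    rw [Finset.sum_const, Finset.card_range, nsmul_eq_mul]
    push_cast
    field_simp
  have hxhatX : ∀ k, xhat k ∈ X := by
    intro k
    rw [hxhat k, Finset.smul_sum]
    exact hXcv.sum_mem (hw0 k) (hw1 k) (fun i _ => hxX (i+1))
  have hyhatY : ∀ k, yhat k ∈ Y := by
    intro k
    rw [hyhat k, Finset.smul_sum]
    exact hYcv.sum_mem (hw0 k) (hw1 k) (fun i _ => hyY (i+1))
  -- the averaged gap estimate
  have hgap : ∀ x ∈ X, ∀ y ∈ Y, ∀ k, f (xhat k) y - f x (yhat k)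
      ≤ ((‖x - xs 0‖^2 * (τs 0)⁻¹ + ‖y - ys 0‖^2 * (σs 0)⁻¹)/2) / ((k:ℝ)+1) := by
    intro x hx y hy k
    have hxrep : xhat k = ∑ i ∈ Finset.range (k+1), ((k:ℝ)+1)⁻¹ • xs (i+1) := by
      rw [hxhat k, Finset.smul_sum]
    have hyrep : yhat k = ∑ i ∈ Finset.range (k+1), ((k:ℝ)+1)⁻¹ • ys (i+1) := by
      rw [hyhat k, Finset.smul_sum]
    have hgj : g (xhat k) ≤ ∑ i ∈ Finset.range (k+1), ((k:ℝ)+1)⁻¹ * g (xs (i+1)) := by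
      rw [hxrep]
      exact hg.map_sum_le (hw0 k) (hw1 k) (fun i _ => Set.mem_univ _)
    have hhj : h (yhat k) ≤ ∑ i ∈ Finset.range (k+1), ((k:ℝ)+1)⁻¹ * h (ys (i+1)) := by
      rw [hyrep]
      exact hh.map_sum_le (hw0 k) (hw1 k) (fun i _ => Set.mem_univ _)
    have hKx : ⟪K (xhat k), y⟫ = ∑ i ∈ Finset.range (k+1), ((k:ℝ)+1)⁻¹ * ⟪K (xs (i+1)), y⟫ := by
      rw [hxrep, map_sum, sum_inner]
      exact Finset.sum_congr rfl (fun i _ => by rw [map_smul, real_inner_smul_left])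
    have hKy : ⟪K x, yhat k⟫ = ∑ i ∈ Finset.range (k+1), ((k:ℝ)+1)⁻¹ * ⟪K x, ys (i+1)⟫ := by
      rw [hyrep, inner_sum]
      exact Finset.sum_congr rfl (fun i _ => by rw [real_inner_smul_right])
    have hgx : g x = ∑ _i ∈ Finset.range (k+1), ((k:ℝ)+1)⁻¹ * g x := by
      rw [← Finset.sum_mul, hw1 k, one_mul]
    have hhy : h y = ∑ _i ∈ Finset.range (k+1), ((k:ℝ)+1)⁻¹ * h y := by
      rw [← Finset.sum_mul, hw1 k, one_mul]
    have key : f (xhat k) y - f x (yhat k)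
        ≤ ((k:ℝ)+1)⁻¹ * ∑ i ∈ Finset.range (k+1), GAP x y i := by
      have expand : ((k:ℝ)+1)⁻¹ * ∑ i ∈ Finset.range (k+1), GAP x y i
          = (∑ i ∈ Finset.range (k+1), ((k:ℝ)+1)⁻¹ * ⟪K (xs (i+1)), y⟫)
            + (∑ i ∈ Finset.range (k+1), ((k:ℝ)+1)⁻¹ * g (xs (i+1)))
            - (∑ _i ∈ Finset.range (k+1), ((k:ℝ)+1)⁻¹ * h y)
            - (∑ i ∈ Finset.range (k+1), ((k:ℝ)+1)⁻¹ * ⟪K x, ys (i+1)⟫)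
            - (∑ _i ∈ Finset.range (k+1), ((k:ℝ)+1)⁻¹ * g x)
            + (∑ i ∈ Finset.range (k+1), ((k:ℝ)+1)⁻¹ * h (ys (i+1))) := by
        rw [Finset.mul_sum, ← Finset.sum_add_distrib, ← Finset.sum_sub_distrib,
          ← Finset.sum_sub_distrib, ← Finset.sum_sub_distrib, ← Finset.sum_add_distrib]
        exact Finset.sum_congr rfl (fun i _ => by simp only [hGAP]; ring)
      rw [expand, ← hKx, ← hKy, ← hgx, ← hhy, hf, hf]
      linarith [hgj, hhj]
    have hs2 : ∑ i ∈ Finset.range (k+1), GAP x y i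
        ≤ (‖x - xs 0‖^2 * (τs 0)⁻¹ + ‖y - ys 0‖^2 * (σs 0)⁻¹)/2 := by
      have h1 := hmaster x hx y hy (k+1)
      have h2 : (0:ℝ) ≤ ‖x - xs (k+1)‖^2 * (τs (k+1))⁻¹/2 := by
        have := hτ (k+1); positivity
      have h3 : (0:ℝ) ≤ ‖y - ys (k+1)‖^2 * (σs (k+1))⁻¹/4 := by
        have := hσ (k+1); positivity
      linarith
    calc f (xhat k) y - f x (yhat k)
        ≤ ((k:ℝ)+1)⁻¹ * ∑ i ∈ Finset.range (k+1), GAP x y i := key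
      _ ≤ ((k:ℝ)+1)⁻¹ * ((‖x - xs 0‖^2 * (τs 0)⁻¹ + ‖y - ys 0‖^2 * (σs 0)⁻¹)/2) :=
          mul_le_mul_of_nonneg_left hs2 (by positivity)
      _ = ((‖x - xs 0‖^2 * (τs 0)⁻¹ + ‖y - ys 0‖^2 * (σs 0)⁻¹)/2) / ((k:ℝ)+1) := by
          ring
  -- identification of cluster points
  have hclaim : ∀ (a : H₁) (b : H₂) (φ : ℕ → ℕ), StrictMono φ →
      (∀ u : H₁, Filter.Tendsto (fun i => ⟪xhat (φ i), u⟫) Filter.atTop (nhds ⟪a, u⟫)) →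
      (∀ v : H₂, Filter.Tendsto (fun i => ⟪yhat (φ i), v⟫) Filter.atTop (nhds ⟪b, v⟫)) →
      ∀ x ∈ X, ∀ y ∈ Y, f a y ≤ f x b := by
    intro a b φ hφ hwx hwy x hx y hy
    by_contra hlt
    push_neg at hlt
    set δ : ℝ := f a y - f x b with hδ
    have hδ0 : 0 < δ := by rw [hδ]; linarith
    set Cxy : ℝ := (‖x - xs 0‖^2 * (τs 0)⁻¹ + ‖y - ys 0‖^2 * (σs 0)⁻¹)/2 with hCxy
    have hCxy0 : 0 ≤ Cxy := by
      have := hτ 0; have := hσ 0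
      positivity
    have hp : Filter.Tendsto (fun i => ⟪K (xhat (φ i)), y⟫) Filter.atTop (nhds ⟪K a, y⟫) := by
      have h1 := hwx ((ContinuousLinearMap.adjoint K) y)
      simpa only [ContinuousLinearMap.adjoint_inner_right] using h1
    have hq : Filter.Tendsto (fun i => ⟪K x, yhat (φ i)⟫) Filter.atTop (nhds ⟪K x, b⟫) := by
      have h1 := hwy (K x)
      have e1 : (fun i => ⟪yhat (φ i), K x⟫) = fun i => ⟪K x, yhat (φ i)⟫ := by
        funext i; rw [real_inner_comm]
      rw [e1, real_inner_comm] at h1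
      exact h1
    have hr : Filter.Tendsto (fun i => Cxy / ((φ i : ℝ)+1)) Filter.atTop (nhds 0) := by
      have h2 : Filter.Tendsto (fun k : ℕ => Cxy / ((k:ℝ)+1)) Filter.atTop (nhds 0) := by
        apply Filter.Tendsto.div_atTop tendsto_const_nhds
        exact Filter.tendsto_atTop_add_const_right _ 1 tendsto_natCast_atTop_atTop
      exact h2.comp hφ.tendsto_atTop
    have hineq : ∀ i, ⟪K (xhat (φ i)), y⟫ + g (xhat (φ i)) - h y - ⟪K x, yhat (φ i)⟫ - g x
        + h (yhat (φ i)) ≤ Cxy / ((φ i : ℝ)+1) := by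
      intro i
      have h1 := hgap x hx y hy (φ i)
      rw [hf, hf] at h1
      rw [hCxy]
      linarith
    have hev1 : ∀ᶠ i in Filter.atTop, ⟪K a, y⟫ - δ/8 < ⟪K (xhat (φ i)), y⟫ :=
      hp.eventually (eventually_gt_nhds (by linarith))
    have hev2 : ∀ᶠ i in Filter.atTop, ⟪K x, yhat (φ i)⟫ < ⟪K x, b⟫ + δ/8 :=
      hq.eventually (eventually_lt_nhds (by linarith))
    have hev3 : ∀ᶠ i in Filter.atTop, Cxy / ((φ i : ℝ)+1) < δ/8 :=
      hr.eventually (eventually_lt_nhds (by linarith))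
    have hev : ∀ᶠ i in Filter.atTop,
        g (xhat (φ i)) ≤ g a - δ/4 ∨ h (yhat (φ i)) ≤ h b - δ/4 := by
      filter_upwards [hev1, hev2, hev3] with i h1 h2 h3
      have h4 := hineq i
      have h5 : g (xhat (φ i)) + h (yhat (φ i)) < g a + h b - 5*δ/8 := by
        have hfa : f a y = ⟪K a, y⟫ + g a - h y := hf a y
        have hfx : f x b = ⟪K x, b⟫ + g x - h b := hf x b
        have h6 : δ = (⟪K a, y⟫ + g a - h y) - (⟪K x, b⟫ + g x - h b) := by
          rw [hδ, hfa, hfx]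
        linarith
      by_cases hcase : g (xhat (φ i)) ≤ g a - δ/4
      · exact Or.inl hcase
      · right
        push_neg at hcase
        linarith
    rcases Filter.frequently_or_distrib.1 hev.frequently with hfreq | hfreq
    · have hSconv : Convex ℝ {z : H₁ | g z ≤ g a - δ/4} := by
        have h1 := hg.convex_le (g a - δ/4)
        simpa using h1
      have hScl : IsClosed {z : H₁ | g z ≤ g a - δ/4} :=
        hglsc.isClosed_preimage (g a - δ/4)
      have h2 : a ∈ {z : H₁ | g z ≤ g a - δ/4} := mem_of_weak_freq hSconv hScl hfreq hwx
      simp only [Set.mem_setOf_eq] at h2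
      linarith
    · have hSconv : Convex ℝ {z : H₂ | h z ≤ h b - δ/4} := by
        have h1 := hh.convex_le (h b - δ/4)
        simpa using h1
      have hScl : IsClosed {z : H₂ | h z ≤ h b - δ/4} :=
        hhlsc.isClosed_preimage (h b - δ/4)
      have h2 : b ∈ {z : H₂ | h z ≤ h b - δ/4} := mem_of_weak_freq hSconv hScl hfreq hwy
      simp only [Set.mem_setOf_eq] at h2
      linarith
  constructor
  · -- existence of a weak sequential cluster point
    obtain ⟨a, φ₁, hφ₁, hconv₁⟩ := exists_weak_subseq xhat Rx hxhatb
    obtain ⟨b, φ₂, hφ₂, hconv₂⟩ :=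
      exists_weak_subseq (fun i => yhat (φ₁ i)) Ry (fun i => hyhatb (φ₁ i))
    refine ⟨a, b, φ₁ ∘ φ₂, hφ₁.comp hφ₂, fun u => ?_, fun v => ?_⟩
    · exact (hconv₁ u).comp hφ₂.tendsto_atTop
    · exact hconv₂ v
  · rintro a b ⟨φ, hφ, hwx, hwy⟩
    have haX : a ∈ X := by
      apply mem_of_weak_freq hXcv hXcl ?_ hwx
      apply Filter.Eventually.frequently
      filter_upwards with i
      exact hxhatX (φ i)
    have hbY : b ∈ Y := by
      apply mem_of_weak_freq hYcv hYcl ?_ hwy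
      apply Filter.Eventually.frequently
      filter_upwards with i
      exact hyhatY (φ i)
    exact ⟨haX, hbY, fun x hx y hy =>
      ⟨hclaim a b φ hφ hwx hwy a haX y hy, hclaim a b φ hφ hwx hwy x hx b hbY⟩⟩
end
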